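/- arXiv:cs/0510056 — 3 statements merged into one kernel-verified Lean document; each statement's English description precedes it below -/
import Mathlib

section
/- Let L be a contour bundle in ℝ² and let α, β > 0. If Γ is an admissible contour that is a local minimizer of the contour-based energy E_c (and whose imaginary part Γ_im = Γ \ ∂L is nonempty), then Γ is a polygon whose vertices are all anchored within ∂L: every connected component of Γ \ ∂L is an open straight line segment whose two endpoints lie in the finite set ∂L, so Γ is a simple closed polygon all of whose vertices belong to ∂L. -/
open Set Metric MeasureTheory Filter
open scoped ENNReal RealInnerProductSpace Topology

noncomputable section

/-- The Euclidean plane `ℝ²`. -/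
abbrev Pt : Type := EuclideanSpace ℝ (Fin 2)

/-- `γ` is piecewise `C^k` on `[a, b]`: there is a finite partition
`a = t₀ < t₁ < ⋯ < tₙ = b` such that `γ` is `C^k` on each closed piece. -/
def PiecewiseCkOn (k : ℕ) (γ : ℝ → Pt) (a b : ℝ) : Prop :=
  ∃ (n : ℕ) (t : ℕ → ℝ), t 0 = a ∧ t n = b ∧ (∀ i < n, t i < t (i + 1)) ∧
    ∀ i < n, ContDiffOn ℝ k γ (Set.Icc (t i) (t (i + 1)))

/-- A simple closed piecewise-`C²` curve in the plane: a continuous `L`-periodic loop,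
injective on `[0, L)`, piecewise `C²`. -/
structure SCCurve where
  L : ℝ
  hL : 0 < L
  γ : ℝ → Pt
  cont : Continuous γ
  per : Function.Periodic γ L
  inj : Set.InjOn γ (Set.Ico 0 L)
  pc2 : PiecewiseCkOn 2 γ 0 L

/-- The trace (image) of a simple closed curve. -/
def SCCurve.image (c : SCCurve) : Set Pt := Set.range c.γ

/-- A subset of the plane is a simple closed piecewise-`C²` curve. -/
def IsSimpleClosedCurve (Γ : Set Pt) : Prop := ∃ c : SCCurve, c.image = Γ

/-- A configuration `Q = Q₁ ∪ ⋯ ∪ Q_k`: finitely many pairwise disjoint compact sets,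
each the closure of its nonempty interior, whose frontiers are piecewise-`C²`
simple closed curves. -/
structure Config where
  k : ℕ
  piece : Fin k → Set Pt
  compact : ∀ i, IsCompact (piece i)
  regular : ∀ i, piece i = closure (interior (piece i))
  nonemptyInt : ∀ i, (interior (piece i)).Nonempty
  disj : ∀ i j, i ≠ j → Disjoint (piece i) (piece j)
  bcurve : Fin k → SCCurve
  hbc : ∀ i, frontier (piece i) = (bcurve i).image

/-- The union `Q = Q₁ ∪ ⋯ ∪ Q_k`. -/
def Config.carrier (Q : Config) : Set Pt := ⋃ i, Q.piece i

/-- A piecewise-`C²` loop is generic if at every point the one-sided tangent vectors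
exist and are nonzero, and the outgoing tangent is never a negative multiple of the
incoming one (no cusps: at every kink both the outer span `θ` and the inner span
`θ* = 2π − θ` are strictly positive). -/
def SCCurve.Generic (c : SCCurve) : Prop :=
  ∀ t : ℝ, ∃ v w : Pt, v ≠ 0 ∧ w ≠ 0 ∧
    HasDerivWithinAt c.γ v (Set.Iic t) t ∧ HasDerivWithinAt c.γ w (Set.Ici t) t ∧
    ∀ r : ℝ, r < 0 → w ≠ r • v

/-- A generic configuration: all boundary curves are generic. -/
def Config.Generic (Q : Config) : Prop := ∀ i, (Q.bcurve i).Generic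

/-- Real part `Γ_re = Γ ∩ ∂Q` of a contour relative to a configuration with carrier `Q`. -/
def reSet (Q Γ : Set Pt) : Set Pt := Γ ∩ frontier Q

/-- Imaginary part `Γ_im = Γ \ ∂Q`. -/
def imSet (Q Γ : Set Pt) : Set Pt := Γ \ frontier Q

/-- The set of connected components of a set `S ⊆ ℝ²`. -/
def components (S : Set Pt) : Set (Set Pt) := {C | ∃ x ∈ S, C = connectedComponentIn S x}

/-- An admissible contour for the object-based model: a simple closed piecewise-`C²`
curve avoiding the interior of `Q`, whose imaginary part has finitely many connected
components, each of whose closures contains two distinct endpoints. -/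
def Admissible (Q Γ : Set Pt) : Prop :=
  IsSimpleClosedCurve Γ ∧ Γ ∩ interior Q = ∅ ∧
  (components (imSet Q Γ)).Finite ∧
  ∀ C ∈ components (imSet Q Γ),
    ∃ a b : Pt, a ≠ b ∧ a ∈ closure C \ C ∧ b ∈ closure C \ C

/-- The energy `E_o[Γ | α, β] = α·H¹(Γ_re) + β·H¹(Γ_im)`. -/
def Eo (α β : ℝ) (Q Γ : Set Pt) : ℝ≥0∞ :=
  ENNReal.ofReal α * μH[1] (reSet Q Γ) + ENNReal.ofReal β * μH[1] (imSet Q Γ)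

/-- `Γ` is a local minimizer of `E_o[·|α,β]`: it beats every admissible contour within
some positive Hausdorff distance. -/
def IsLocalMinEo (α β : ℝ) (Q Γ : Set Pt) : Prop :=
  ∃ ε > (0:ℝ), ∀ Γ' : Set Pt, Admissible Q Γ' →
    Metric.hausdorffDist Γ Γ' < ε → Eo α β Q Γ ≤ Eo α β Q Γ'

/-- A junction point of `Γ`: an endpoint of (the closure of) a connected component of
the imaginary part. -/
def IsJunction (Q Γ : Set Pt) (z : Pt) : Prop :=
  ∃ C ∈ components (imSet Q Γ), z ∈ closure C \ C

/-- A compact simple arc from `p` to `q`: the image of an injective piecewise-`C²`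
continuous path on `[0,1]` with distinct endpoints `p ≠ q`. -/
def IsSimpleArc (l : Set Pt) (p q : Pt) : Prop :=
  p ≠ q ∧ ∃ γ : ℝ → Pt, ContinuousOn γ (Set.Icc 0 1) ∧ Set.InjOn γ (Set.Icc 0 1) ∧
    PiecewiseCkOn 2 γ 0 1 ∧ γ '' Set.Icc 0 1 = l ∧ γ 0 = p ∧ γ 1 = q

/-- A contour bundle `L = l₁ ∪ ⋯ ∪ l_n`: finitely many pairwise disjoint compact simple
arcs, each with two distinct endpoints. -/
structure ContourBundle where
  n : ℕ
  arc : Fin n → Set Pt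
  ep1 : Fin n → Pt
  ep2 : Fin n → Pt
  harc : ∀ i, IsSimpleArc (arc i) (ep1 i) (ep2 i)
  hcompact : ∀ i, IsCompact (arc i)
  disj : ∀ i j, i ≠ j → Disjoint (arc i) (arc j)

/-- The union `L = l₁ ∪ ⋯ ∪ l_n`. -/
def ContourBundle.carrier (L : ContourBundle) : Set Pt := ⋃ i, L.arc i

/-- The (finite) endpoint set `∂L = ⋃ᵢ {aᵢ, bᵢ}`. -/
def ContourBundle.eps (L : ContourBundle) : Set Pt := ⋃ i, ({L.ep1 i, L.ep2 i} : Set Pt)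

/-- `L° = L \ ∂L`. -/
def ContourBundle.inn (L : ContourBundle) : Set Pt := L.carrier \ L.eps

/-- An admissible contour for the contour-based model: a simple closed piecewise-`C²`
curve with `Γ ∩ L° = ∅`. -/
def AdmissibleC (L : ContourBundle) (Γ : Set Pt) : Prop :=
  IsSimpleClosedCurve Γ ∧ Γ ∩ L.inn = ∅

/-- The contour-based energy `E_c[Γ] = −α·card(Γ ∩ ∂L) + β·H¹(Γ)`, valued in `EReal`. -/
def Ec (L : ContourBundle) (α β : ℝ) (Γ : Set Pt) : EReal :=
  (β : EReal) * ((μH[1] Γ : ℝ≥0∞) : EReal) - (α : EReal) * (((Γ ∩ L.eps).ncard : ℝ) : EReal)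

/-- `Γ` is a local minimizer of `E_c`. -/
def IsLocalMinEc (L : ContourBundle) (α β : ℝ) (Γ : Set Pt) : Prop :=
  ∃ ε > (0:ℝ), ∀ Γ' : Set Pt, AdmissibleC L Γ' →
    Metric.hausdorffDist Γ Γ' < ε → Ec L α β Γ ≤ Ec L α β Γ'


/-!
Near a point of `Γ` off `∂L` the contour keeps away from `L`, so a short arc of `Γ` there can be
replaced by its chord. The competitor is admissible, Hausdorff-close to `Γ` and meets `∂L` in the
same points, so local minimality makes the arc no longer than its chord, hence straight.
Straightness of short arcs propagates along each parameter interval between consecutive visits of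
`∂L`, which is therefore mapped onto an open segment; if `Γ` visited `∂L` at most once, the whole
closed curve would be straight, which is absurd.
-/

section HausdorffMeasure

variable {E : Type*} [MetricSpace E] [MeasurableSpace E] [BorelSpace E]

theorem IsPreconnected.ofReal_le_hausdorffMeasure_inter_ball {K : Set E} (hK : IsPreconnected K)
    {p q : E} (hp : p ∈ K) (hq : q ∈ K) {m : ℝ} (hm : m ≤ dist q p) :
    ENNReal.ofReal m ≤ μH[1] (K ∩ ball p m) := by
  have hlip : LipschitzWith 1 (dist · p) := LipschitzWith.dist_left p
  have hIcc : Icc 0 (dist q p) ⊆ (dist · p) '' K := by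
    simpa using hK.intermediate_value hp hq hlip.continuous.continuousOn
  have hIco : Ico 0 m ⊆ (dist · p) '' (K ∩ ball p m) := by
    rintro τ ⟨hτ₀, hτm⟩
    obtain ⟨y, hy, rfl⟩ := hIcc ⟨hτ₀, hτm.le.trans hm⟩
    exact ⟨y, ⟨hy, mem_ball.mpr hτm⟩, rfl⟩
  calc ENNReal.ofReal m = μH[1] (Ico (0 : ℝ) m) := by
        rw [hausdorffMeasure_real, Real.volume_Ico, sub_zero]
    _ ≤ μH[1] ((dist · p) '' (K ∩ ball p m)) := measure_mono hIco
    _ ≤ μH[1] (K ∩ ball p m) := by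
        simpa using hlip.hausdorffMeasure_image_le zero_le_one (K ∩ ball p m)

theorem IsPreconnected.edist_le_hausdorffMeasure {K : Set E} (hK : IsPreconnected K)
    {x y : E} (hx : x ∈ K) (hy : y ∈ K) : edist x y ≤ μH[1] K := by
  rw [edist_dist, dist_comm]
  exact (hK.ofReal_le_hausdorffMeasure_inter_ball hx hy le_rfl).trans
    (measure_mono inter_subset_left)

/-- Otherwise three disjoint balls, centred at `z`, `a` and `b`, would carry more than `dist a b`
of the length of `K`. -/
theorem IsPreconnected.dist_add_dist_eq_of_hausdorffMeasure_le {K : Set E}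
    (hK : IsPreconnected K) {a b z : E} (ha : a ∈ K) (hb : b ∈ K) (hz : z ∈ K)
    (hle : μH[1] K ≤ edist a b) : dist a z + dist z b = dist a b := by
  set d := dist a b
  set s := dist a z
  set t := dist z b
  have hdist_le : ∀ {x y}, x ∈ K → y ∈ K → dist x y ≤ d := fun hx hy =>
    (ENNReal.ofReal_le_ofReal_iff dist_nonneg).mp <| by
      rw [← edist_dist, ← edist_dist]; exact (hK.edist_le_hausdorffMeasure hx hy).trans hle
  refine le_antisymm ?_ (dist_triangle a z b)
  by_contra! hgt
  have hs : s ≤ d := hdist_le ha hz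
  have ht : t ≤ d := hdist_le hz hb
  obtain ⟨ρ, hρ, hρs, hρc⟩ : ∃ ρ, 0 < ρ ∧ 2 * ρ ≤ s ∧ 3 * ρ ≤ s + t - d :=
    ⟨min ((s + t - d) / 3) (s / 2), lt_min (by linarith) (by linarith),
      by linarith [min_le_right ((s + t - d) / 3) (s / 2)],
      by linarith [min_le_left ((s + t - d) / 3) (s / 2)]⟩
  have h₁ := hK.ofReal_le_hausdorffMeasure_inter_ball hz ha (m := ρ) (by linarith)
  have h₂ := hK.ofReal_le_hausdorffMeasure_inter_ball ha hb (m := s - 2 * ρ)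
    (by rw [dist_comm]; linarith)
  have h₃ := hK.ofReal_le_hausdorffMeasure_inter_ball hb ha (m := d - s + 2 * ρ) (by linarith)
  have hd₁₂ : Disjoint (ball z ρ) (ball a (s - 2 * ρ)) :=
    ball_disjoint_ball (by rw [dist_comm]; linarith)
  have hd₁₃ : Disjoint (ball z ρ) (ball b (d - s + 2 * ρ)) := ball_disjoint_ball (by linarith)
  have hd₂₃ : Disjoint (ball a (s - 2 * ρ)) (ball b (d - s + 2 * ρ)) :=
    ball_disjoint_ball (by linarith)
  set μK := (μH[1] : Measure E).restrict K
  have hsum : μK (ball z ρ ∪ (ball a (s - 2 * ρ) ∪ ball b (d - s + 2 * ρ)))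
      = μH[1] (K ∩ ball z ρ) + (μH[1] (K ∩ ball a (s - 2 * ρ))
        + μH[1] (K ∩ ball b (d - s + 2 * ρ))) := by
    rw [measure_union (disjoint_union_right.mpr ⟨hd₁₂, hd₁₃⟩)
        (measurableSet_ball.union measurableSet_ball), measure_union hd₂₃ measurableSet_ball]
    simp only [μK, Measure.restrict_apply measurableSet_ball, inter_comm]
  have hbig : ENNReal.ofReal (d + ρ) ≤ μH[1] K := by
    calc ENNReal.ofReal (d + ρ)
        = ENNReal.ofReal ρ + (ENNReal.ofReal (s - 2 * ρ) + ENNReal.ofReal (d - s + 2 * ρ)) := by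
          rw [← ENNReal.ofReal_add (by linarith) (by linarith),
            ← ENNReal.ofReal_add (by linarith) (by linarith)]
          ring_nf
      _ ≤ μK (ball z ρ ∪ (ball a (s - 2 * ρ) ∪ ball b (d - s + 2 * ρ))) := by
          rw [hsum]; gcongr
      _ ≤ μK univ := measure_mono (subset_univ _)
      _ = μH[1] K := by rw [Measure.restrict_apply_univ]
  linarith [(ENNReal.ofReal_le_ofReal_iff dist_nonneg).mp
    (hbig.trans (hle.trans_eq (edist_dist a b)))]

end HausdorffMeasure

theorem Metric.hausdorffDist_union_le_of_subset_closedBall {X : Type*} [PseudoMetricSpace X]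
    {K S R : Set X} {x : X} {r : ℝ} (hr : 0 ≤ r) (hK : K ⊆ closedBall x r)
    (hS : S ⊆ closedBall x r) (hKne : K.Nonempty) (hSne : S.Nonempty) :
    hausdorffDist (K ∪ R) (S ∪ R) ≤ 2 * r := by
  have key : ∀ {A B : Set X}, A ⊆ closedBall x r → B ⊆ closedBall x r → B.Nonempty →
      ∀ y ∈ A ∪ R, ∃ z ∈ B ∪ R, dist y z ≤ 2 * r := by
    rintro A B hA hB ⟨z, hz⟩ y (hy | hy)
    · refine ⟨z, .inl hz, (dist_triangle_right y z x).trans ?_⟩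
      linarith [mem_closedBall.mp (hA hy), mem_closedBall.mp (hB hz)]
    · exact ⟨y, .inr hy, by rw [dist_self]; positivity⟩
  exact hausdorffDist_le_of_mem_dist (by positivity) (key hK hS hSne) (key hS hK hKne)

section Segment

variable {E : Type*} [NormedAddCommGroup E] [NormedSpace ℝ E]

theorem IsPreconnected.eq_segment_of_subset {K : Set E} (hK : IsPreconnected K) {a b : E}
    (ha : a ∈ K) (hb : b ∈ K) (hsub : K ⊆ segment ℝ a b) : K = segment ℝ a b := by
  refine hsub.antisymm ?_
  rcases eq_or_ne a b with rfl | hab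
  · simpa using ha
  rintro y hy
  rw [segment_eq_image_lineMap] at hy
  obtain ⟨τ, hτ, rfl⟩ := hy
  obtain ⟨z, hzK, hz⟩ : ∃ z ∈ K, dist a z = τ * dist a b := by
    have := hK.intermediate_value ha hb (f := dist a)
      (continuous_const.dist continuous_id).continuousOn
    simp only [dist_self] at this
    exact this ⟨mul_nonneg hτ.1 dist_nonneg, mul_le_of_le_one_left dist_nonneg hτ.2⟩
  have hz' := hsub hzK
  rw [segment_eq_image_lineMap] at hz'
  obtain ⟨τ', hτ', rfl⟩ := hz'
  rw [dist_left_lineMap, Real.norm_of_nonneg hτ'.1, mul_left_inj' (dist_ne_zero.mpr hab)] at hz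
  rwa [← hz]

theorem segment_sdiff_endpoints {x y : E} (hxy : x ≠ y) :
    segment ℝ x y \ {x, y} = openSegment ℝ x y := by
  rw [← insert_endpoints_openSegment]
  ext z
  simp only [Set.mem_sdiff, mem_insert_iff, mem_singleton_iff, not_or]
  refine ⟨fun ⟨h, hx, hy⟩ => by simpa [hx, hy] using h, fun h => ⟨.inr (.inr h), ?_, ?_⟩⟩
  · rintro rfl; exact hxy (left_mem_openSegment_iff.mp h)
  · rintro rfl; exact hxy (right_mem_openSegment_iff.mp h)

variable [MeasurableSpace E] [BorelSpace E]

theorem hausdorffMeasure_image_Icc_lt_top_of_contDiffOn {γ : ℝ → E} {a b : ℝ}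
    (h : ContDiffOn ℝ 1 γ (Icc a b)) : μH[1] (γ '' Icc a b) < ⊤ := by
  obtain ⟨K, hK⟩ := h.exists_lipschitzOnWith one_ne_zero (convex_Icc a b) isCompact_Icc
  calc μH[1] (γ '' Icc a b) ≤ (K : ℝ≥0∞) ^ (1 : ℝ) * μH[1] (Icc a b) :=
        hK.hausdorffMeasure_image_le zero_le_one
    _ < ⊤ := by
        rw [ENNReal.rpow_one, hausdorffMeasure_real, Real.volume_Icc]
        exact ENNReal.mul_lt_top ENNReal.coe_lt_top ENNReal.ofReal_lt_top

variable [StrictConvexSpace ℝ E]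

theorem IsPreconnected.eq_segment_of_hausdorffMeasure_le {K : Set E} (hK : IsPreconnected K)
    {a b : E} (ha : a ∈ K) (hb : b ∈ K) (hle : μH[1] K ≤ edist a b) : K = segment ℝ a b :=
  hK.eq_segment_of_subset ha hb fun _ hz => mem_segment_iff_wbtw.mpr <|
    dist_add_dist_eq_iff.mp (hK.dist_add_dist_eq_of_hausdorffMeasure_le ha hb hz hle)

end Segment

namespace ContourBundle

variable (L : ContourBundle)

theorem eps_finite : L.eps.Finite :=
  finite_iUnion fun i => (finite_singleton (L.ep2 i)).insert (L.ep1 i)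

theorem eps_subset_carrier : L.eps ⊆ L.carrier := by
  simp only [ContourBundle.eps, ContourBundle.carrier, iUnion_subset_iff]
  intro i
  obtain ⟨-, g, -, -, -, hg, hg₀, hg₁⟩ := L.harc i
  refine insert_subset_iff.mpr ⟨?_, singleton_subset_iff.mpr ?_⟩ <;>
    refine mem_iUnion.mpr ⟨i, hg ▸ ?_⟩
  exacts [⟨0, by norm_num, hg₀⟩, ⟨1, by norm_num, hg₁⟩]

theorem isClosed_carrier : IsClosed L.carrier :=
  isClosed_iUnion_of_finite fun i => (L.hcompact i).isClosed

end ContourBundle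

theorem hausdorffMeasure_le_of_Ec_le {L : ContourBundle} {α β : ℝ} (hβ : 0 < β)
    {Γ Γ' : Set Pt} (heps : Γ ∩ L.eps = Γ' ∩ L.eps) (h : Ec L α β Γ ≤ Ec L α β Γ') :
    μH[1] Γ ≤ μH[1] Γ' := by
  have hβ' : ((β : ℝ) : EReal) = ((ENNReal.ofReal β : ℝ≥0∞) : EReal) := by
    rw [EReal.coe_ennreal_ofReal, max_eq_left hβ.le]
  set r : ℝ := α * (Γ' ∩ L.eps).ncard
  have hsub : ((ENNReal.ofReal β * μH[1] Γ : ℝ≥0∞) : EReal) - r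
      ≤ ((ENNReal.ofReal β * μH[1] Γ' : ℝ≥0∞) : EReal) - r := by
    simpa only [Ec, heps, r, EReal.coe_mul, EReal.coe_ennreal_mul, hβ'] using h
  have hmul := EReal.coe_ennreal_le_coe_ennreal_iff.mp <| by
    simpa only [EReal.sub_add_cancel] using add_le_add_left hsub (r : EReal)
  exact (ENNReal.mul_le_mul_iff_right (ENNReal.ofReal_pos.mpr hβ).ne' ENNReal.ofReal_ne_top).mp hmul

namespace PiecewiseCkOn

variable {k : ℕ} {γ γ' : ℝ → Pt} {a b d : ℝ}

theorem refl (γ : ℝ → Pt) (a : ℝ) : PiecewiseCkOn k γ a a :=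
  ⟨0, fun _ => a, rfl, rfl, fun _ h => absurd h (Nat.not_lt_zero _),
    fun _ h => absurd h (Nat.not_lt_zero _)⟩

theorem of_contDiffOn (hab : a < b) (h : ContDiffOn ℝ k γ (Icc a b)) : PiecewiseCkOn k γ a b :=
  ⟨1, fun i => if i = 0 then a else b, rfl, rfl,
    fun i hi => by rw [Nat.lt_one_iff.mp hi]; simpa using hab,
    fun i hi => by rw [Nat.lt_one_iff.mp hi]; simpa using h⟩

theorem mem_Icc_of_mem_piece {n : ℕ} {t : ℕ → ℝ} (ht : ∀ i < n, t i < t (i + 1)) {i : ℕ}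
    (hi : i < n) {w : ℝ} (hw : w ∈ Icc (t i) (t (i + 1))) : w ∈ Icc (t 0) (t n) := by
  have hmono := (strictMonoOn_Iic_of_lt_succ (ψ := t) (n := n) fun m hm => ht m hm).monotoneOn
  exact ⟨(hmono (mem_Iic.mpr (Nat.zero_le n)) (mem_Iic.mpr hi.le) (Nat.zero_le i)).trans hw.1,
    hw.2.trans (hmono (mem_Iic.mpr hi) (mem_Iic.mpr le_rfl) hi)⟩

theorem exists_mem_piece {n : ℕ} {t : ℕ → ℝ} (ht : ∀ i < n, t i < t (i + 1)) (hn : 0 < n)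
    {w : ℝ} (hw : w ∈ Icc (t 0) (t n)) : ∃ i < n, w ∈ Icc (t i) (t (i + 1)) := by
  induction n with
  | zero => omega
  | succ m ih =>
    rcases Nat.eq_zero_or_pos m with rfl | hm
    · exact ⟨0, Nat.one_pos, hw⟩
    rcases le_or_gt w (t m) with h | h
    · obtain ⟨i, hi, hmem⟩ := ih (fun i hi => ht i (by omega)) hm ⟨hw.1, h⟩
      exact ⟨i, by omega, hmem⟩
    · exact ⟨m, by omega, h.le, hw.2⟩

theorem congr (h : PiecewiseCkOn k γ a b) (he : EqOn γ' γ (Icc a b)) : PiecewiseCkOn k γ' a b := by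
  obtain ⟨n, t, rfl, rfl, hlt, hcd⟩ := h
  exact ⟨n, t, rfl, rfl, hlt, fun i hi =>
    (hcd i hi).congr fun w hw => he (mem_Icc_of_mem_piece hlt hi hw)⟩

theorem append (h₁ : PiecewiseCkOn k γ a b) (h₂ : PiecewiseCkOn k γ b d) :
    PiecewiseCkOn k γ a d := by
  obtain ⟨n₁, t₁, rfl, rfl, hlt₁, hcd₁⟩ := h₁
  obtain ⟨n₂, t₂, h₂₀, rfl, hlt₂, hcd₂⟩ := h₂
  set t : ℕ → ℝ := fun i => if i ≤ n₁ then t₁ i else t₂ (i - n₁)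
  have hpiece : ∀ i < n₁ + n₂, (i < n₁ ∧ t i = t₁ i ∧ t (i + 1) = t₁ (i + 1)) ∨
      (i - n₁ < n₂ ∧ t i = t₂ (i - n₁) ∧ t (i + 1) = t₂ (i - n₁ + 1)) := by
    intro i hi
    by_cases hi₁ : i < n₁
    · exact .inl ⟨hi₁, if_pos hi₁.le, if_pos hi₁⟩
    · refine .inr ⟨by omega, ?_, ?_⟩
      · by_cases hin : i = n₁
        · subst hin; simp [t, h₂₀]
        · simp only [t, if_neg (show ¬ i ≤ n₁ by omega)]
      · simp only [t, if_neg (show ¬ i + 1 ≤ n₁ by omega), show i + 1 - n₁ = i - n₁ + 1 by omega]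
  refine ⟨n₁ + n₂, t, by simp [t], ?_, fun i hi => ?_, fun i hi => ?_⟩
  · rcases Nat.eq_zero_or_pos n₂ with h | h
    · simp [t, h, ← h₂₀]
    · simp [t, show ¬ n₁ + n₂ ≤ n₁ by omega]
  · rcases hpiece i hi with ⟨hi', e₁, e₂⟩ | ⟨hi', e₁, e₂⟩
    · rw [e₁, e₂]; exact hlt₁ i hi'
    · rw [e₁, e₂]; exact hlt₂ _ hi'
  · rcases hpiece i hi with ⟨hi', e₁, e₂⟩ | ⟨hi', e₁, e₂⟩
    · rw [e₁, e₂]; exact hcd₁ i hi'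
    · rw [e₁, e₂]; exact hcd₂ _ hi'

theorem restrict_left (h : PiecewiseCkOn k γ a b) {a' : ℝ} (ha : a ≤ a') (hb : a' < b) :
    PiecewiseCkOn k γ a' b := by
  obtain ⟨n, t, rfl, rfl, hlt, hcd⟩ := h
  induction n generalizing t with
  | zero => exact absurd (ha.trans_lt hb) (lt_irrefl _)
  | succ m ih =>
    have htail : PiecewiseCkOn k γ (t 1) (t (m + 1)) :=
      ⟨m, fun i => t (i + 1), rfl, rfl, fun i hi => hlt (i + 1) (by omega),
        fun i hi => hcd (i + 1) (by omega)⟩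
    rcases lt_or_ge a' (t 1) with h | h
    · exact (of_contDiffOn h ((hcd 0 (by omega)).mono (Icc_subset_Icc ha le_rfl))).append htail
    · exact ih (fun i => t (i + 1)) h hb (fun i hi => hlt (i + 1) (by omega))
        (fun i hi => hcd (i + 1) (by omega))

theorem restrict_right (h : PiecewiseCkOn k γ a b) {b' : ℝ} (hb : b' ≤ b) (ha : a < b') :
    PiecewiseCkOn k γ a b' := by
  obtain ⟨n, t, rfl, rfl, hlt, hcd⟩ := h
  induction n with
  | zero => exact absurd (ha.trans_le hb) (lt_irrefl _)
  | succ m ih =>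
    rcases le_or_gt b' (t m) with h | h
    · exact ih h (fun i hi => hlt i (by omega)) (fun i hi => hcd i (by omega))
    · have hinit : PiecewiseCkOn k γ (t 0) (t m) :=
        ⟨m, t, rfl, rfl, fun i hi => hlt i (by omega), fun i hi => hcd i (by omega)⟩
      exact hinit.append (of_contDiffOn h ((hcd m (by omega)).mono (Icc_subset_Icc le_rfl hb)))

theorem comp_add_const (h : PiecewiseCkOn k γ a b) (s : ℝ) :
    PiecewiseCkOn k (fun w => γ (w + s)) (a - s) (b - s) := by
  obtain ⟨n, t, rfl, rfl, hlt, hcd⟩ := h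
  refine ⟨n, fun i => t i - s, rfl, rfl, fun i hi => by simpa using hlt i hi, fun i hi => ?_⟩
  refine (hcd i hi).comp (contDiff_id.add contDiff_const).contDiffOn fun w hw => ?_
  simp only [mem_Icc] at hw ⊢
  constructor <;> linarith [hw.1, hw.2]

theorem hausdorffMeasure_image_Icc_lt_top (h : PiecewiseCkOn k γ a b) (hk : 1 ≤ k) (hab : a < b) :
    μH[1] (γ '' Icc a b) < ⊤ := by
  obtain ⟨n, t, rfl, rfl, hlt, hcd⟩ := h
  have hn : 0 < n := Nat.pos_of_ne_zero fun hn => by subst hn; exact lt_irrefl _ hab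
  have hcover : γ '' Icc (t 0) (t n) ⊆ ⋃ i ∈ Finset.range n, γ '' Icc (t i) (t (i + 1)) := by
    rintro _ ⟨w, hw, rfl⟩
    obtain ⟨i, hi, hmem⟩ := exists_mem_piece hlt hn hw
    exact mem_biUnion (Finset.mem_range.mpr hi) ⟨w, hmem, rfl⟩
  refine (measure_mono hcover).trans_lt <| (measure_biUnion_finset_le _ _).trans_lt <|
    ENNReal.sum_lt_top.mpr fun i hi => ?_
  exact hausdorffMeasure_image_Icc_lt_top_of_contDiffOn
    ((hcd i (Finset.mem_range.mp hi)).of_le (by exact_mod_cast hk))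

end PiecewiseCkOn

theorem isSimpleClosedCurve_image_Icc {f : ℝ → Pt} {T : ℝ} (hT : 0 < T)
    (hf : ContinuousOn f (Icc 0 T)) (hinj : InjOn f (Ico 0 T)) (hclose : f T = f 0)
    (hpc : PiecewiseCkOn 2 f 0 T) : IsSimpleClosedCurve (f '' Icc 0 T) := by
  have : Fact (0 < T) := ⟨hT⟩
  set g : ℝ → Pt := fun w => AddCircle.liftIco T 0 f (w : AddCircle T)
  have hg : EqOn g f (Ico 0 T) := fun w hw =>
    AddCircle.liftIco_coe_apply (by simpa using hw)
  have hgper : Function.Periodic g T := fun w => by simp [g]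
  have hgf : EqOn g f (Icc 0 T) := by
    intro w hw
    rcases hw.2.eq_or_lt with rfl | hlt
    · rw [hclose, ← hg ⟨le_rfl, hT⟩, ← hgper 0, zero_add]
    · exact hg ⟨hw.1, hlt⟩
  refine ⟨⟨T, hT, g, ?_, hgper, hg.injOn_iff.mpr hinj, hpc.congr hgf⟩, ?_⟩
  · exact (AddCircle.liftIco_continuous (by rw [zero_add, hclose]) (by rwa [zero_add])).comp
      (AddCircle.continuous_mk' T)
  · rw [SCCurve.image, ← hgper.image_Icc hT 0, zero_add, hgf.image_eq]

instance : NullSingletonClass (μH[1] : Measure Pt) :=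
  Measure.nullSingletonClass_hausdorff Pt one_pos

namespace SCCurve

variable (c : SCCurve)

theorem γ_toIcoMod (a w : ℝ) : c.γ (toIcoMod c.hL a w) = c.γ w := by
  rw [← sub_sub_cancel w (toIcoMod c.hL a w), self_sub_toIcoMod]
  exact c.per.sub_zsmul_eq _

theorem injOn_Ico (a : ℝ) : InjOn c.γ (Ico a (a + c.L)) := by
  intro w₁ h₁ w₂ h₂ he
  have h₀ : toIcoMod c.hL 0 w₁ = toIcoMod c.hL 0 w₂ :=
    c.inj (by simpa using toIcoMod_mem_Ico c.hL 0 w₁) (by simpa using toIcoMod_mem_Ico c.hL 0 w₂)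
      (by rw [γ_toIcoMod, γ_toIcoMod, he])
  rw [← (toIcoMod_eq_self c.hL).mpr h₁, ← (toIcoMod_eq_self c.hL).mpr h₂]
  exact (toIcoMod_inj c.hL).mpr ((toIcoMod_inj c.hL).mp h₀)

theorem image_eq_image_Icc (a : ℝ) : c.image = c.γ '' Icc a (a + c.L) :=
  (c.per.image_Icc c.hL a).symm

theorem isPreconnected_image_Icc (a b : ℝ) : IsPreconnected (c.γ '' Icc a b) :=
  isPreconnected_Icc.image _ c.cont.continuousOn

theorem image_Icc_inter_image_Icc_subset {a b d : ℝ} (hab : a ≤ b) (hda : d ≤ a + c.L) :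
    c.γ '' Icc a b ∩ c.γ '' Icc b d ⊆ {c.γ a, c.γ b} := by
  rintro _ ⟨⟨w₁, hw₁, rfl⟩, w₂, hw₂, he⟩
  rcases hw₂.2.trans hda |>.eq_or_lt with rfl | hlt
  · exact .inl (he.symm.trans (c.per a))
  · have := c.injOn_Ico a ⟨hab.trans hw₂.1, hlt⟩ ⟨hw₁.1, by linarith [hw₁.2, hw₂.1]⟩ he
    exact .inr (congrArg c.γ (le_antisymm hw₁.2 (this ▸ hw₂.1)))

theorem hausdorffMeasure_image_Icc_add {a b d : ℝ} (hab : a ≤ b) (hbd : b ≤ d)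
    (hda : d ≤ a + c.L) :
    μH[1] (c.γ '' Icc a d) = μH[1] (c.γ '' Icc a b) + μH[1] (c.γ '' Icc b d) := by
  have hnull : μH[1] (c.γ '' Icc a b ∩ c.γ '' Icc b d) = 0 :=
    measure_mono_null (c.image_Icc_inter_image_Icc_subset hab hda)
      ((toFinite _).measure_zero _)
  rw [← measure_union_add_inter _ (isCompact_Icc.image c.cont).measurableSet, hnull, add_zero,
    ← image_union, Icc_union_Icc_eq_Icc hab hbd]

theorem piecewiseCkOn_period_mul (m : ℤ) (N : ℕ) :
    PiecewiseCkOn 2 c.γ (m * c.L) (m * c.L + N * c.L) := by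
  induction N with
  | zero => simpa using PiecewiseCkOn.refl c.γ _
  | succ N ih =>
    have hblock := (c.pc2.comp_add_const (-((m + N : ℤ) * c.L))).congr (γ' := c.γ) fun w _ => by
      simpa [zsmul_eq_mul, sub_eq_add_neg] using (c.per.sub_zsmul_eq (x := w) (m + N)).symm
    refine ih.append (by convert hblock using 2 <;> push_cast <;> ring)

theorem piecewiseCkOn {a b : ℝ} (hab : a < b) : PiecewiseCkOn 2 c.γ a b := by
  set m : ℤ := ⌊a / c.L⌋
  have hma : m * c.L ≤ a := (le_div_iff₀ c.hL).mp (Int.floor_le _)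
  obtain ⟨N, hN⟩ := exists_nat_ge ((b - m * c.L) / c.L)
  have hNb : b ≤ m * c.L + N * c.L := by linarith [(div_le_iff₀ c.hL).mp hN]
  exact ((c.piecewiseCkOn_period_mul m N).restrict_left hma (hab.trans_le hNb)).restrict_right
    hNb hab

theorem hausdorffMeasure_image_lt_top : μH[1] c.image < ⊤ := by
  rw [c.image_eq_image_Icc 0, zero_add]
  exact c.pc2.hausdorffMeasure_image_Icc_lt_top one_le_two c.hL

/-- Runs along the chord from `γ u` to `γ v` for `w ∈ [0, 1]`, then along `γ` from `v` to `u + L`,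
which brings it back to `γ u` at `w = 1 + (u + L - v)`. -/
def chordLoop (u v w : ℝ) : Pt :=
  if w ≤ 1 then AffineMap.lineMap (c.γ u) (c.γ v) w else c.γ (w + (v - 1))

section ChordLoop

variable {c} {u v : ℝ}

theorem chordLoop_eqOn_Icc : EqOn (c.chordLoop u v) (AffineMap.lineMap (c.γ u) (c.γ v)) (Icc 0 1) :=
  fun _ hw => if_pos hw.2

theorem chordLoop_eqOn_Ici : EqOn (c.chordLoop u v) (fun w => c.γ (w + (v - 1))) (Ici 1) := by
  intro w hw
  rcases (mem_Ici.mp hw).eq_or_lt with rfl | hlt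
  · simp [chordLoop]
  · exact if_neg (not_le.mpr hlt)

theorem continuous_chordLoop : Continuous (c.chordLoop u v) :=
  Continuous.if_le AffineMap.lineMap_continuous (c.cont.comp (continuous_add_const _))
    continuous_id continuous_const fun w hw => by simp [show w = 1 from hw]

theorem image_chordLoop (hvu : v ≤ u + c.L) :
    c.chordLoop u v '' Icc 0 (1 + (u + c.L - v)) =
      segment ℝ (c.γ u) (c.γ v) ∪ c.γ '' Icc v (u + c.L) := by
  rw [← Icc_union_Icc_eq_Icc zero_le_one (by linarith), image_union,
    chordLoop_eqOn_Icc.image_eq, (chordLoop_eqOn_Ici.mono Icc_subset_Ici_self).image_eq,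
    segment_eq_image_lineMap, ← image_image c.γ (· + (v - 1)), image_add_const_Icc]
  congr 3 <;> ring

theorem chordLoop_period (hvu : v ≤ u + c.L) :
    c.chordLoop u v (1 + (u + c.L - v)) = c.chordLoop u v 0 := by
  rw [chordLoop_eqOn_Ici (by simp; linarith), chordLoop_eqOn_Icc ⟨le_rfl, zero_le_one⟩]
  simpa [show 1 + (u + c.L - v) + (v - 1) = u + c.L by ring] using c.per u

theorem injOn_chordLoop (huv : u < v) (hne : c.γ u ≠ c.γ v)
    (hsep : ∀ w ∈ Ioo v (u + c.L), c.γ w ∉ segment ℝ (c.γ u) (c.γ v)) :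
    InjOn (c.chordLoop u v) (Ico 0 (1 + (u + c.L - v))) := by
  have hcases : ∀ w ∈ Ico 0 (1 + (u + c.L - v)),
      (w ∈ Icc 0 1 ∧ c.chordLoop u v w ∈ segment ℝ (c.γ u) (c.γ v) ∧
        c.chordLoop u v w = AffineMap.lineMap (c.γ u) (c.γ v) w) ∨
      (w + (v - 1) ∈ Ioo v (u + c.L) ∧ c.chordLoop u v w = c.γ (w + (v - 1))) := by
    intro w hw
    by_cases h : w ≤ 1
    · refine .inl ⟨⟨hw.1, h⟩, ?_, chordLoop_eqOn_Icc ⟨hw.1, h⟩⟩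
      rw [chordLoop_eqOn_Icc ⟨hw.1, h⟩, segment_eq_image_lineMap]
      exact mem_image_of_mem _ ⟨hw.1, h⟩
    · exact .inr ⟨⟨by linarith [not_le.mp h], by linarith [hw.2]⟩, if_neg h⟩
  intro w₁ h₁ w₂ h₂ he
  rcases hcases w₁ h₁ with ⟨-, hs₁, e₁⟩ | ⟨h₁', e₁⟩ <;>
    rcases hcases w₂ h₂ with ⟨-, hs₂, e₂⟩ | ⟨h₂', e₂⟩
  · rw [e₁, e₂] at he; exact AffineMap.lineMap_injective ℝ hne he
  · exact absurd (e₂ ▸ he ▸ hs₁) (hsep _ h₂')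
  · exact absurd (e₁ ▸ he.symm ▸ hs₂) (hsep _ h₁')
  · rw [e₁, e₂] at he
    have := c.injOn_Ico v ⟨h₁'.1.le, by linarith [h₁'.2]⟩ ⟨h₂'.1.le, by linarith [h₂'.2]⟩ he
    linarith

theorem piecewiseCkOn_chordLoop (hvu : v < u + c.L) :
    PiecewiseCkOn 2 (c.chordLoop u v) 0 (1 + (u + c.L - v)) := by
  have hchord : PiecewiseCkOn 2 (AffineMap.lineMap (c.γ u) (c.γ v)) 0 1 :=
    .of_contDiffOn one_pos (contDiffOn_const.lineMap contDiffOn_const contDiffOn_id)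
  have harc : PiecewiseCkOn 2 (fun w => c.γ (w + (v - 1))) 1 (1 + (u + c.L - v)) := by
    convert (c.piecewiseCkOn hvu).comp_add_const (v - 1) using 1 <;> ring
  exact (hchord.congr chordLoop_eqOn_Icc).append
    (harc.congr (chordLoop_eqOn_Ici.mono Icc_subset_Ici_self))

theorem isSimpleClosedCurve_segment_union (huv : u < v) (hvu : v < u + c.L)
    (hsep : ∀ w ∈ Ioo v (u + c.L), c.γ w ∉ segment ℝ (c.γ u) (c.γ v)) :
    IsSimpleClosedCurve (segment ℝ (c.γ u) (c.γ v) ∪ c.γ '' Icc v (u + c.L)) := by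
  have hne : c.γ u ≠ c.γ v := fun h =>
    huv.ne (c.injOn_Ico u ⟨le_rfl, by linarith⟩ ⟨huv.le, hvu⟩ h)
  rw [← image_chordLoop hvu.le]
  exact isSimpleClosedCurve_image_Icc (by linarith) continuous_chordLoop.continuousOn
    (injOn_chordLoop huv hne hsep) (chordLoop_period hvu.le) (piecewiseCkOn_chordLoop hvu)

end ChordLoop

/-- Compare with the competitor that replaces the arc `γ([u, v])` by its chord. -/
theorem hausdorffMeasure_image_Icc_le_edist {L : ContourBundle} {α β ε : ℝ} (hβ : 0 < β)
    (hΓL : c.image ∩ L.inn = ∅)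
    (hmin : ∀ Γ', AdmissibleC L Γ' → hausdorffDist c.image Γ' < ε →
      Ec L α β c.image ≤ Ec L α β Γ')
    {u v : ℝ} (huv : u < v) (hvu : v < u + c.L) {x : Pt} {r : ℝ} (hr : 0 ≤ r) (hrε : 2 * r < ε)
    (hK : c.γ '' Icc u v ⊆ closedBall x r) (hL : Disjoint (closedBall x r) L.carrier)
    (hsep : ∀ w ∈ Ioo v (u + c.L), c.γ w ∉ segment ℝ (c.γ u) (c.γ v)) :
    μH[1] (c.γ '' Icc u v) ≤ edist (c.γ u) (c.γ v) := by
  set K := c.γ '' Icc u v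
  set S := segment ℝ (c.γ u) (c.γ v)
  set R := c.γ '' Icc v (u + c.L)
  have hΓ : c.image = K ∪ R := by
    rw [c.image_eq_image_Icc u, ← image_union, Icc_union_Icc_eq_Icc huv.le hvu.le]
  have hu : c.γ u ∈ K := mem_image_of_mem _ ⟨le_rfl, huv.le⟩
  have hS : S ⊆ closedBall x r :=
    (convex_closedBall x r).segment_subset (hK hu) (hK (mem_image_of_mem _ ⟨huv.le, le_rfl⟩))
  have hadm : AdmissibleC L (S ∪ R) := by
    refine ⟨isSimpleClosedCurve_segment_union huv hvu hsep, ?_⟩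
    refine eq_empty_of_forall_notMem fun y ⟨hy, hyL⟩ => hy.elim (fun hyS => ?_) fun hyR => ?_
    · exact hL.notMem_of_mem_left (hS hyS) hyL.1
    · exact (eq_empty_iff_forall_notMem.mp hΓL) y ⟨hΓ ▸ .inr hyR, hyL⟩
  have hdist : hausdorffDist c.image (S ∪ R) < ε := by
    rw [hΓ]
    exact (hausdorffDist_union_le_of_subset_closedBall hr hK hS ⟨_, hu⟩
      ⟨_, left_mem_segment ℝ _ _⟩).trans_lt hrε
  have heps : c.image ∩ L.eps = (S ∪ R) ∩ L.eps := by
    have hoff : ∀ {A : Set Pt}, A ⊆ closedBall x r → A ∩ L.eps = ∅ := fun hA =>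
      eq_empty_of_forall_notMem fun y hy =>
        hL.notMem_of_mem_left (hA hy.1) (L.eps_subset_carrier hy.2)
    rw [hΓ, union_inter_distrib_right, union_inter_distrib_right, hoff hK, hoff hS]
  have hRfin : μH[1] R ≠ ⊤ :=
    (measure_mono (hΓ ▸ subset_union_right)).trans_lt c.hausdorffMeasure_image_lt_top |>.ne
  refine (ENNReal.add_le_add_iff_right hRfin).mp ?_
  calc μH[1] K + μH[1] R = μH[1] c.image := by
        rw [c.image_eq_image_Icc u, c.hausdorffMeasure_image_Icc_add huv.le hvu.le le_rfl]
    _ ≤ μH[1] (S ∪ R) := hausdorffMeasure_le_of_Ec_le hβ heps (hmin _ hadm hdist)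
    _ ≤ μH[1] S + μH[1] R := measure_union_le _ _
    _ = edist (c.γ u) (c.γ v) + μH[1] R := by rw [hausdorffMeasure_segment]

theorem exists_image_inter_closedBall_subset (w₀ : ℝ) {δ : ℝ} (hδ : 0 < δ) :
    ∃ ρ > 0, c.image ∩ closedBall (c.γ w₀) ρ ⊆ c.γ '' Ioo (w₀ - δ) (w₀ + δ) := by
  set Far := c.γ '' Icc (w₀ + δ) (w₀ + c.L - δ)
  have hx : c.γ w₀ ∉ Far := by
    rintro ⟨w, hw, he⟩
    have := c.injOn_Ico w₀ ⟨by linarith [hw.1], by linarith [hw.2]⟩ ⟨le_rfl, by linarith [c.hL]⟩ he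
    linarith [hw.1]
  obtain ⟨ρ, hρ, hball⟩ := nhds_basis_closedBall.mem_iff.mp
    ((isCompact_Icc.image c.cont).isClosed.isOpen_compl.mem_nhds hx)
  refine ⟨ρ, hρ, ?_⟩
  rintro _ ⟨⟨w, rfl⟩, hw⟩
  obtain ⟨w', hw', he⟩ := c.per.exists_mem_Ioc c.hL w (w₀ - δ)
  refine ⟨w', ⟨hw'.1, lt_of_not_ge fun h => hball hw ?_⟩, he.symm⟩
  exact ⟨w', ⟨h, by linarith [hw'.2]⟩, he.symm⟩

/-- Take for `u, v` the extreme parameters near `w₀` whose points lie in a small ball around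
`γ w₀`: the chord lies in that ball, and the curve only returns to the ball near `w₀`. -/
theorem exists_short_arc_chord_free (w₀ : ℝ) {r θ : ℝ} (hr : 0 < r) (hθ : 0 < θ) :
    ∃ u v, u < w₀ ∧ w₀ < v ∧ v - u < θ ∧ v < u + c.L ∧
      c.γ '' Icc u v ⊆ closedBall (c.γ w₀) r ∧
      ∀ w ∈ Ioo v (u + c.L), c.γ w ∉ segment ℝ (c.γ u) (c.γ v) := by
  set x := c.γ w₀
  have hnhds : ∀ {R}, 0 < R → ∃ δ > 0, ∀ w ∈ Icc (w₀ - δ) (w₀ + δ), c.γ w ∈ closedBall x R :=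
    fun hR => by
      simpa only [Real.closedBall_eq_Icc] using nhds_basis_closedBall.eventually_iff.mp
        (c.cont.continuousAt.eventually_mem (closedBall_mem_nhds x hR))
  obtain ⟨δ₀, hδ₀, hδ₀r⟩ := hnhds hr
  set δ := min δ₀ (min (θ / 4) (c.L / 4))
  have hδ : 0 < δ := lt_min hδ₀ (lt_min (by linarith) (by linarith [c.hL]))
  have hδδ₀ : δ ≤ δ₀ := min_le_left _ _
  have hδθ : δ ≤ θ / 4 := (min_le_right _ _).trans (min_le_left _ _)
  have hδL : δ ≤ c.L / 4 := (min_le_right _ _).trans (min_le_right _ _)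
  obtain ⟨ρ, hρ, hnear⟩ := c.exists_image_inter_closedBall_subset w₀ hδ
  obtain ⟨η, hη, hηρ⟩ := hnhds hρ
  set V := Icc (w₀ - δ) (w₀ + δ) ∩ c.γ ⁻¹' closedBall x ρ
  have hVc : IsCompact V := isCompact_Icc.inter_right (isClosed_closedBall.preimage c.cont)
  set η' := min η δ
  have hmemV : ∀ w ∈ Icc (w₀ - η') (w₀ + η'), w ∈ V := fun w hw =>
    ⟨⟨by linarith [hw.1, min_le_right η δ], by linarith [hw.2, min_le_right η δ]⟩,
      hηρ w ⟨by linarith [hw.1, min_le_left η δ], by linarith [hw.2, min_le_left η δ]⟩⟩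
  have hη' : 0 < η' := lt_min hη hδ
  have hVne : V.Nonempty := ⟨w₀, hmemV w₀ ⟨by linarith, by linarith⟩⟩
  set u := sInf V
  set v := sSup V
  have huV : u ∈ V := hVc.sInf_mem hVne
  have hvV : v ∈ V := hVc.sSup_mem hVne
  have hu : u < w₀ :=
    (csInf_le hVc.bddBelow (hmemV _ ⟨le_rfl, by linarith⟩)).trans_lt (by linarith)
  have hv : w₀ < v :=
    (by linarith : w₀ < w₀ + η').trans_le (le_csSup hVc.bddAbove (hmemV _ ⟨by linarith, le_rfl⟩))
  refine ⟨u, v, hu, hv, by linarith [huV.1.1, hvV.1.2], by linarith [huV.1.1, hvV.1.2, c.hL],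
    ?_, fun w hw hseg => ?_⟩
  · rintro _ ⟨w, hw, rfl⟩
    exact hδ₀r w ⟨by linarith [huV.1.1, hw.1], by linarith [hvV.1.2, hw.2]⟩
  · have hball := (convex_closedBall x ρ).segment_subset huV.2 hvV.2 hseg
    obtain ⟨w', hw', he⟩ := hnear ⟨⟨w, rfl⟩, hball⟩
    have hw'V : w' ∈ V := ⟨Ioo_subset_Icc_self hw', show c.γ w' ∈ _ from he ▸ hball⟩
    have hw'v : w' ≤ v := le_csSup hVc.bddAbove hw'V
    have := c.injOn_Ico u ⟨csInf_le hVc.bddBelow hw'V, by linarith [huV.1.1, hvV.1.2, c.hL]⟩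
      ⟨by linarith [hw.1], hw.2⟩ he
    linarith [hw.1]

def IsStraightOn (a b : ℝ) : Prop :=
  c.γ '' Icc a b = segment ℝ (c.γ a) (c.γ b)

section IsStraightOn

variable {c}

theorem isStraightOn_self (a : ℝ) : c.IsStraightOn a a := by
  simp [IsStraightOn]

theorem IsStraightOn.wbtw {a b w : ℝ} (h : c.IsStraightOn a b) (hw : w ∈ Icc a b) :
    Wbtw ℝ (c.γ a) (c.γ w) (c.γ b) :=
  mem_segment_iff_wbtw.mp (h ▸ mem_image_of_mem _ hw)

theorem isStraightOn_iff_hausdorffMeasure_le {a b : ℝ} (hab : a ≤ b) :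
    c.IsStraightOn a b ↔ μH[1] (c.γ '' Icc a b) ≤ edist (c.γ a) (c.γ b) :=
  ⟨fun h => by rw [h, hausdorffMeasure_segment],
    (c.isPreconnected_image_Icc a b).eq_segment_of_hausdorffMeasure_le
      (mem_image_of_mem _ ⟨le_rfl, hab⟩) (mem_image_of_mem _ ⟨hab, le_rfl⟩)⟩

/-- Length is additive along the arc and at least the chord on every piece, so a piece longer
than its chord would make the whole arc longer than its chord. -/
theorem IsStraightOn.mono {u v a b : ℝ} (h : c.IsStraightOn u v) (hua : u ≤ a) (hab : a ≤ b)
    (hbv : b ≤ v) (hvu : v ≤ u + c.L) : c.IsStraightOn a b := by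
  rw [isStraightOn_iff_hausdorffMeasure_le hab]
  by_contra! hlt
  have hlen : ∀ {x y}, x ≤ y → edist (c.γ x) (c.γ y) ≤ μH[1] (c.γ '' Icc x y) := fun hxy =>
    (c.isPreconnected_image_Icc _ _).edist_le_hausdorffMeasure
      (mem_image_of_mem _ ⟨le_rfl, hxy⟩) (mem_image_of_mem _ ⟨hxy, le_rfl⟩)
  refine lt_irrefl (edist (c.γ u) (c.γ v)) ?_
  calc edist (c.γ u) (c.γ v)
      ≤ edist (c.γ u) (c.γ a) + (edist (c.γ a) (c.γ b) + edist (c.γ b) (c.γ v)) :=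
        (edist_triangle _ (c.γ a) _).trans (by gcongr; exact edist_triangle _ _ _)
    _ < μH[1] (c.γ '' Icc u a) + (μH[1] (c.γ '' Icc a b) + μH[1] (c.γ '' Icc b v)) :=
        ENNReal.add_lt_add_of_le_of_lt (edist_ne_top _ _) (hlen hua)
          (ENNReal.add_lt_add_of_lt_of_le (edist_ne_top _ _) hlt (hlen hbv))
    _ = μH[1] (c.γ '' Icc u v) := by
        rw [c.hausdorffMeasure_image_Icc_add hua (hab.trans hbv) hvu,
          c.hausdorffMeasure_image_Icc_add hab hbv (by linarith)]
    _ = edist (c.γ u) (c.γ v) := by rw [h, hausdorffMeasure_segment]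

theorem IsStraightOn.trans {a b d : ℝ} (h₁ : c.IsStraightOn a b) (h₂ : c.IsStraightOn b d)
    (hw : Wbtw ℝ (c.γ a) (c.γ b) (c.γ d)) (hab : a ≤ b) (hbd : b ≤ d) (hda : d ≤ a + c.L) :
    c.IsStraightOn a d := by
  rw [isStraightOn_iff_hausdorffMeasure_le (hab.trans hbd),
    c.hausdorffMeasure_image_Icc_add hab hbd hda, h₁, h₂, hausdorffMeasure_segment,
    hausdorffMeasure_segment, edist_dist, edist_dist, edist_dist,
    ← ENNReal.ofReal_add dist_nonneg dist_nonneg, hw.dist_add_dist]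

/-- The supremum of the parameters `w` with `γ([a, w])` straight cannot stop before `t`. -/
theorem isStraightOn_of_forall_exists {s t : ℝ} (hts : t ≤ s + c.L)
    (hloc : ∀ w ∈ Ioo s t, ∀ θ > 0, ∃ u v, u < w ∧ w < v ∧ v - u < θ ∧ c.IsStraightOn u v)
    {a b : ℝ} (hsa : s < a) (hab : a ≤ b) (hbt : b < t) : c.IsStraightOn a b := by
  set M := {w | a ≤ w ∧ w < t ∧ c.IsStraightOn a w}
  have haM : a ∈ M := ⟨le_rfl, hab.trans_lt hbt, isStraightOn_self a⟩
  have hM : BddAbove M := ⟨t, fun w hw => hw.2.1.le⟩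
  set w₁ := sSup M
  have haw₁ : a ≤ w₁ := le_csSup hM haM
  have htw₁ : t ≤ w₁ := by
    by_contra! hw₁t
    have hw₁ : w₁ ∈ Ioo s t := ⟨hsa.trans_le haw₁, hw₁t⟩
    rcases haw₁.eq_or_lt with hea | hlt
    · obtain ⟨u, v, hu, hv, hvu, huv⟩ := hloc w₁ hw₁ (t - w₁) (by linarith)
      have hvM : v ∈ M :=
        ⟨by linarith, by linarith, huv.mono (by linarith) (by linarith) le_rfl (by linarith)⟩
      linarith [le_csSup hM hvM]
    · obtain ⟨u, v, hu, hv, hvu, huv⟩ :=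
        hloc w₁ hw₁ (min (t - w₁) (w₁ - a)) (lt_min (by linarith) (by linarith))
      have hau : a < u := by linarith [min_le_right (t - w₁) (w₁ - a)]
      have hvt : v < t := by linarith [min_le_left (t - w₁) (w₁ - a)]
      obtain ⟨m, hmM, hum⟩ := exists_lt_of_lt_csSup ⟨a, haM⟩ hu
      have hmv : m ≤ v := (le_csSup hM hmM).trans hv.le
      obtain ⟨ham, -, ham'⟩ := hmM
      have hne : c.γ u ≠ c.γ m := fun he =>
        hum.ne (c.injOn_Ico u ⟨le_rfl, by linarith⟩ ⟨hum.le, by linarith⟩ he)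
      have hw : Wbtw ℝ (c.γ a) (c.γ m) (c.γ v) :=
        (ham'.wbtw ⟨hau.le, hum.le⟩).trans_expand_right (huv.wbtw ⟨hum.le, hmv⟩) hne
      have hvM : v ∈ M := ⟨by linarith, hvt,
        ham'.trans (huv.mono hum.le hmv le_rfl (by linarith)) hw ham hmv (by linarith)⟩
      linarith [le_csSup hM hvM]
  obtain ⟨m, ⟨-, hmt, ham⟩, hbm⟩ := exists_lt_of_lt_csSup ⟨a, haM⟩ (hbt.trans_le htw₁)
  exact ham.mono le_rfl hab hbm.le (by linarith)

/-- Betweenness is the closed condition `dist a b + dist b d = dist a d`, so it passes to the limit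
at the ends of the interval. -/
theorem wbtw_of_forall_isStraightOn {s t : ℝ}
    (h : ∀ a b, s < a → a ≤ b → b < t → c.IsStraightOn a b) {a b d : ℝ} (hsa : s ≤ a)
    (hab : a < b) (hbd : b < d) (hdt : d ≤ t) : Wbtw ℝ (c.γ a) (c.γ b) (c.γ d) := by
  have hlim : ∀ {g : ℝ → ℝ}, Continuous g → Tendsto (c.γ ∘ g) (𝓝[>] 0) (𝓝 (c.γ (g 0))) :=
    fun hg => ((c.cont.comp hg).tendsto 0).mono_left nhdsWithin_le_nhds
  have ha := hlim (continuous_const_add a)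
  have hd := hlim (continuous_sub_left d)
  simp only [add_zero, sub_zero] at ha hd
  have hev : ∀ᶠ ε in 𝓝[>] 0, dist ((c.γ ∘ (a + ·)) ε) (c.γ b) + dist (c.γ b) ((c.γ ∘ (d - ·)) ε)
      = dist ((c.γ ∘ (a + ·)) ε) ((c.γ ∘ (d - ·)) ε) := by
    filter_upwards [Ioo_mem_nhdsGT (lt_min (sub_pos.2 hab) (sub_pos.2 hbd))] with ε hε
    have h₁ := hε.2.trans_le (min_le_left _ _)
    have h₂ := hε.2.trans_le (min_le_right _ _)
    exact dist_add_dist_eq_iff.mpr <| (h _ _ (by linarith [hε.1]) (by linarith)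
      (by linarith [hε.1])).wbtw ⟨by linarith, by linarith⟩
  rw [← dist_add_dist_eq_iff]
  exact tendsto_nhds_unique_of_eventuallyEq
    ((ha.dist tendsto_const_nhds).add (tendsto_const_nhds.dist hd)) (ha.dist hd) hev

theorem not_forall_isStraightOn (s : ℝ) :
    ¬ ∀ a b, s < a → a ≤ b → b < s + c.L → c.IsStraightOn a b := by
  intro h
  have hL := c.hL
  have h₁ := wbtw_of_forall_isStraightOn h le_rfl (b := s + c.L / 3) (d := s + 2 * c.L / 3)
    (by linarith) (by linarith) (by linarith)
  have h₂ := wbtw_of_forall_isStraightOn h (a := s + c.L / 3) (b := s + 2 * c.L / 3)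
    (d := s + c.L) (by linarith) (by linarith) (by linarith) le_rfl
  rw [c.per s] at h₂
  have := (wbtw_swap_right_iff ℝ _).mp ⟨h₁, h₂.symm⟩
  have := c.injOn_Ico s ⟨by linarith, by linarith⟩ ⟨by linarith, by linarith⟩ this
  linarith

theorem image_Ioo_eq_openSegment {s t : ℝ} (hst : s < t) (hts : t < s + c.L)
    (h : ∀ a b, s < a → a ≤ b → b < t → c.IsStraightOn a b) :
    c.γ '' Ioo s t = openSegment ℝ (c.γ s) (c.γ t) := by
  have hinj : InjOn c.γ (Icc s t) :=
    (c.injOn_Ico s).mono fun _ hw => mem_Ico.mpr ⟨hw.1, hw.2.trans_lt hts⟩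
  have hne : c.γ s ≠ c.γ t := fun he => hst.ne (hinj ⟨le_rfl, hst.le⟩ ⟨hst.le, le_rfl⟩ he)
  have hstraight : c.IsStraightOn s t := by
    refine (c.isPreconnected_image_Icc s t).eq_segment_of_subset
      (mem_image_of_mem _ ⟨le_rfl, hst.le⟩) (mem_image_of_mem _ ⟨hst.le, le_rfl⟩) ?_
    rintro _ ⟨w, hw, rfl⟩
    rcases hw.1.eq_or_lt with rfl | hsw
    · exact left_mem_segment ℝ _ _
    rcases hw.2.eq_or_lt with rfl | hwt
    · exact right_mem_segment ℝ _ _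
    exact mem_segment_iff_wbtw.mpr (wbtw_of_forall_isStraightOn h le_rfl hsw hwt le_rfl)
  rw [← Icc_sdiff_both, hinj.image_sdiff_subset (pair_subset (left_mem_Icc.mpr hst.le)
    (right_mem_Icc.mpr hst.le)), image_pair, hstraight, segment_sdiff_endpoints hne]

end IsStraightOn

theorem exists_isStraightOn_of_isLocalMin {L : ContourBundle} {α β ε : ℝ} (hβ : 0 < β)
    (hε : 0 < ε) (hΓL : c.image ∩ L.inn = ∅)
    (hmin : ∀ Γ', AdmissibleC L Γ' → hausdorffDist c.image Γ' < ε →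
      Ec L α β c.image ≤ Ec L α β Γ')
    {w₀ : ℝ} (hw₀ : c.γ w₀ ∉ L.eps) {θ : ℝ} (hθ : 0 < θ) :
    ∃ u v, u < w₀ ∧ w₀ < v ∧ v - u < θ ∧ c.IsStraightOn u v := by
  have hx : c.γ w₀ ∉ L.carrier := fun h =>
    (eq_empty_iff_forall_notMem.mp hΓL) _ ⟨⟨w₀, rfl⟩, h, hw₀⟩
  obtain ⟨r₀, hr₀, hball⟩ :=
    nhds_basis_closedBall.mem_iff.mp (L.isClosed_carrier.isOpen_compl.mem_nhds hx)
  set r := min r₀ (ε / 4)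
  have hr : 0 < r := lt_min hr₀ (by linarith)
  obtain ⟨u, v, hu, hv, hvuθ, hvu, hK, hsep⟩ := c.exists_short_arc_chord_free w₀ hr hθ
  refine ⟨u, v, hu, hv, hvuθ, (isStraightOn_iff_hausdorffMeasure_le (hu.trans hv).le).mpr ?_⟩
  exact c.hausdorffMeasure_image_Icc_le_edist hβ hΓL hmin (hu.trans hv) hvu hr.le
    (by linarith [min_le_right r₀ (ε / 4)]) hK
    (subset_compl_iff_disjoint_right.mp
      ((closedBall_subset_closedBall (min_le_left _ _)).trans hball)) hsep

theorem exists_Ioo_of_notMem {F : Set Pt} (hF : IsClosed F) (hΓF : (c.image ∩ F).Nonempty)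
    {w₀ : ℝ} (hw₀ : c.γ w₀ ∉ F) : ∃ s t, w₀ ∈ Ioo s t ∧ t ≤ s + c.L ∧ c.γ s ∈ F ∧ c.γ t ∈ F ∧
      ∀ w ∈ Ioo s t, c.γ w ∉ F := by
  obtain ⟨_, ⟨w, rfl⟩, hwF⟩ := hΓF
  have hP : IsClosed (c.γ ⁻¹' F) := hF.preimage c.cont
  set P₁ := Icc (w₀ - c.L) w₀ ∩ c.γ ⁻¹' F
  set P₂ := Icc w₀ (w₀ + c.L) ∩ c.γ ⁻¹' F
  have hP₁ : IsCompact P₁ := isCompact_Icc.inter_right hP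
  have hP₂ : IsCompact P₂ := isCompact_Icc.inter_right hP
  have hP₁ne : P₁.Nonempty := by
    obtain ⟨w', hw', he⟩ := c.per.exists_mem_Ico c.hL w (w₀ - c.L)
    exact ⟨w', ⟨hw'.1, by linarith [hw'.2]⟩, show c.γ w' ∈ F from he ▸ hwF⟩
  have hP₂ne : P₂.Nonempty := by
    obtain ⟨w', hw', he⟩ := c.per.exists_mem_Ico c.hL w w₀
    exact ⟨w', Ico_subset_Icc_self hw', show c.γ w' ∈ F from he ▸ hwF⟩
  obtain ⟨⟨hs₁, hs₂⟩, hsF⟩ := hP₁.sSup_mem hP₁ne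
  obtain ⟨⟨ht₁, ht₂⟩, htF⟩ := hP₂.sInf_mem hP₂ne
  have hs : sSup P₁ < w₀ := hs₂.lt_of_ne fun h => hw₀ (h ▸ hsF)
  have ht : w₀ < sInf P₂ := ht₁.lt_of_ne fun h => hw₀ (h ▸ htF)
  refine ⟨sSup P₁, sInf P₂, ⟨hs, ht⟩, csInf_le hP₂.bddBelow ⟨⟨by linarith, by linarith⟩, ?_⟩,
    hsF, htF, fun w' hw' hw'F => ?_⟩
  · rwa [mem_preimage, c.per]
  rcases le_or_gt w' w₀ with h | h
  · linarith [hw'.1, le_csSup hP₁.bddAbove ⟨⟨by linarith [hw'.1], h⟩, hw'F⟩]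
  · linarith [hw'.2, csInf_le hP₂.bddBelow ⟨⟨h.le, by linarith [hw'.2]⟩, hw'F⟩]

theorem connectedComponentIn_sdiff_eq {F : Set Pt} {s t w₀ : ℝ} (hw₀ : w₀ ∈ Ioo s t)
    (hts : t ≤ s + c.L) (hs : c.γ s ∈ F) (ht : c.γ t ∈ F) (hmid : ∀ w ∈ Ioo s t, c.γ w ∉ F) :
    connectedComponentIn (c.image \ F) (c.γ w₀) = c.γ '' Ioo s t := by
  have hst := hw₀.1.trans hw₀.2
  have hA : c.γ '' Ioo s t ⊆ c.image \ F := by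
    rintro _ ⟨w, hw, rfl⟩
    exact ⟨⟨w, rfl⟩, hmid w hw⟩
  refine subset_antisymm ?_ ((isPreconnected_Ioo.image _ c.cont.continuousOn)
    |>.subset_connectedComponentIn (mem_image_of_mem _ hw₀) hA)
  have hC := connectedComponentIn_subset (c.image \ F) (c.γ w₀)
  have hcover : c.image \ F ⊆ c.γ '' Icc s t ∪ c.γ '' Icc t (s + c.L) := by
    rw [← image_union, Icc_union_Icc_eq_Icc hst.le hts, ← c.image_eq_image_Icc]
    exact sdiff_subset
  have hdisj : c.γ '' Icc s t ∩ c.γ '' Icc t (s + c.L) ⊆ F :=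
    (c.image_Icc_inter_image_Icc_subset hst.le le_rfl).trans (pair_subset hs ht)
  have hsplit := isPreconnected_iff_subset_of_disjoint_closed.mp
    isPreconnected_connectedComponentIn _ _ (isCompact_Icc.image c.cont).isClosed
    (isCompact_Icc.image c.cont).isClosed
    (hC.trans hcover) (eq_empty_of_forall_notMem fun y hy => (hC hy.1).2 (hdisj hy.2))
  have hx : c.γ w₀ ∈ c.γ '' Icc s t := mem_image_of_mem _ (Ioo_subset_Icc_self hw₀)
  have hxC := mem_connectedComponentIn (hA (mem_image_of_mem _ hw₀))
  rcases hsplit with h | h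
  · intro y hy
    obtain ⟨w, hw, rfl⟩ := h hy
    refine ⟨w, ⟨hw.1.lt_of_ne ?_, hw.2.lt_of_ne ?_⟩, rfl⟩ <;> rintro rfl
    exacts [(hC hy).2 hs, (hC hy).2 ht]
  · exact (hmid w₀ hw₀ (hdisj ⟨hx, h hxC⟩)).elim

end SCCurve

theorem statement_7_general (L : ContourBundle) (α β : ℝ) (hβ : 0 < β)
    (Γ : Set Pt) (hadm : AdmissibleC L Γ) (hmin : IsLocalMinEc L α β Γ) :
    ∀ C ∈ components (Γ \ L.eps),
      ∃ a b : Pt, a ≠ b ∧ a ∈ L.eps ∧ b ∈ L.eps ∧ C = openSegment ℝ a b := by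
  obtain ⟨⟨c, rfl⟩, hΓL⟩ := hadm
  rintro C ⟨_, ⟨⟨w₀, rfl⟩, hw₀⟩, rfl⟩
  obtain ⟨ε, hε, hmin⟩ := hmin
  have hstraight : ∀ {s t}, t ≤ s + c.L → (∀ w ∈ Ioo s t, c.γ w ∉ L.eps) →
      ∀ a b, s < a → a ≤ b → b < t → c.IsStraightOn a b := fun hts hoff _ _ =>
    SCCurve.isStraightOn_of_forall_exists hts fun w hw _ hθ =>
      c.exists_isStraightOn_of_isLocalMin hβ hε hΓL hmin (hoff w hw) hθ
  by_cases hF : (c.image ∩ L.eps).Nonempty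
  · obtain ⟨s, t, hw₀st, hts, hs, ht, hoff⟩ :=
      c.exists_Ioo_of_notMem L.eps_finite.isClosed hF hw₀
    rcases hts.lt_or_eq with hts | rfl
    · have hst := hw₀st.1.trans hw₀st.2
      refine ⟨c.γ s, c.γ t, fun he => hst.ne (c.injOn_Ico s ⟨le_rfl, by linarith⟩
        ⟨hst.le, hts⟩ he), hs, ht, ?_⟩
      rw [c.connectedComponentIn_sdiff_eq hw₀st hts.le hs ht hoff,
        SCCurve.image_Ioo_eq_openSegment hst hts (hstraight hts.le hoff)]
    · exact absurd (hstraight le_rfl hoff) (SCCurve.not_forall_isStraightOn s)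
  · exact absurd (hstraight le_rfl fun w _ hw => hF ⟨_, ⟨w, rfl⟩, hw⟩)
      (SCCurve.not_forall_isStraightOn w₀)

/-- an admissible local minimizer of the contour-based energy `E_c` with
nonempty imaginary part is a simple closed polygon whose vertices all belong to `∂L`:
every connected component of `Γ \ ∂L` is an open straight segment with both endpoints
in `∂L`. -/
theorem statement_7 (L : ContourBundle) (α β : ℝ) (hα : 0 < α) (hβ : 0 < β)
    (Γ : Set Pt) (hadm : AdmissibleC L Γ) (hmin : IsLocalMinEc L α β Γ)
    (hne : (Γ \ L.eps).Nonempty) :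
    ∀ C ∈ components (Γ \ L.eps),
      ∃ a b : Pt, a ≠ b ∧ a ∈ L.eps ∧ b ∈ L.eps ∧ C = openSegment ℝ a b :=
  statement_7_general L α β hβ Γ hadm hmin
end
end

section
/- Let Q ⊆ ℝ² be compact, u = χ_Q, and u_σ = u * η_σ the mollification. Assume the boundary blow-up property: for every x in the frontier ∂Q, ‖∇u_σ(x)‖ → ∞ as σ → 0⁺ (this holds when ∂Q is piecewise smooth). Let γ : [a,b] → ℝ² be a piecewise-C¹ curve whose image does not meet the interior of Q. Then, as σ → 0⁺, the weighted length integral ∫_a^b (1/(1 + λ‖∇u_σ(γ(t))‖²))·‖γ'(t)‖ dt converges to ∫_{{t ∈ [a,b] : γ(t) ∉ ∂Q}} ‖γ'(t)‖ dt, the length of the imaginary part Γ_im = Γ \ ∂Q of the curve Γ = γ([a,b]). -/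
open Set Metric MeasureTheory Filter
open scoped ENNReal RealInnerProductSpace Topology

noncomputable section

/-- A mollifier: `η` is `C^∞`, nonnegative, strictly positive on the open unit ball,
supported in the closed unit ball, and of total integral one. -/
def IsMollifier (η : Pt → ℝ) : Prop :=
  ContDiff ℝ (⊤ : ℕ∞) η ∧ (∀ x, 0 ≤ η x) ∧ (∀ x ∈ Metric.ball (0 : Pt) 1, 0 < η x) ∧
    Function.support η ⊆ Metric.closedBall (0 : Pt) 1 ∧ ∫ x : Pt, η x = 1

/-- The mollification `u_σ = χ_Q * η_σ`, where `η_σ(x) = σ⁻²·η(x/σ)`: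
`u_σ(x) = ∫ χ_Q(y)·σ⁻²·η((x−y)/σ) dy`. -/
def moll (Q : Set Pt) (η : Pt → ℝ) (σ : ℝ) (x : Pt) : ℝ :=
  ∫ y : Pt, Set.indicator Q (fun _ => (1 : ℝ)) y * ((σ ^ 2)⁻¹ * η (σ⁻¹ • (x - y)))

lemma moll_zero_aux {Q : Set Pt} {η : Pt → ℝ}
    (hsupp : Function.support η ⊆ Metric.closedBall (0 : Pt) 1)
    {σ : ℝ} (hσ : 0 < σ) {x : Pt} (hx : ∀ y ∈ Q, σ < dist x y) :
    moll Q η σ x = 0 := by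
  unfold moll
  have hz : ∀ y : Pt,
      Set.indicator Q (fun _ => (1:ℝ)) y * ((σ ^ 2)⁻¹ * η (σ⁻¹ • (x - y))) = 0 := by
    intro y
    by_cases hy : y ∈ Q
    · have h1 : η (σ⁻¹ • (x - y)) = 0 := by
        by_contra h
        have hmem := hsupp (Function.mem_support.mpr h)
        rw [Metric.mem_closedBall, dist_zero_right, norm_smul] at hmem
        have hxy := hx y hy
        rw [dist_eq_norm] at hxy
        have hinv : (0:ℝ) < σ⁻¹ := inv_pos.mpr hσ
        have hle : σ⁻¹ * ‖x - y‖ ≤ 1 := by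
          simpa [Real.norm_eq_abs, abs_of_pos hσ] using hmem
        have h2 : σ⁻¹ * σ = 1 := inv_mul_cancel₀ hσ.ne'
        nlinarith
      simp [h1]
    · simp [Set.indicator_of_notMem hy]
  simp [hz]

/-- if `‖∇u_σ‖ → ∞` on `∂Q` as `σ → 0⁺` (boundary blow-up), then for any
piecewise-`C¹` curve `γ : [a,b] → ℝ²` avoiding the interior of the compact set `Q`, the
weighted length `∫_a^b (1 + λ‖∇u_σ(γ(t))‖²)⁻¹·‖γ'(t)‖ dt` converges, as `σ → 0⁺`, to
the length `∫_{{t : γ(t) ∉ ∂Q}} ‖γ'(t)‖ dt` of the imaginary part of the curve. -/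
theorem statement_9 (Q : Set Pt) (hQ : IsCompact Q)
    (η : Pt → ℝ) (hη : IsMollifier η) (lam : ℝ) (hlam : 0 < lam)
    (hblow : ∀ x ∈ frontier Q,
      Filter.Tendsto (fun σ : ℝ => ‖gradient (moll Q η σ) x‖)
        (nhdsWithin 0 (Set.Ioi 0)) Filter.atTop)
    (a b : ℝ) (hab : a ≤ b) (γ γ' : ℝ → Pt)
    (hγcont : ContinuousOn γ (Set.Icc a b))
    (P : Finset ℝ)
    (hγderiv : ∀ t ∈ Set.Icc a b, t ∉ P → HasDerivAt γ (γ' t) t)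
    (hγ'int : MeasureTheory.IntegrableOn (fun t => ‖γ' t‖) (Set.Icc a b))
    (havoid : γ '' Set.Icc a b ∩ interior Q = ∅) :
    Filter.Tendsto
      (fun σ : ℝ =>
        ∫ t in Set.Icc a b, (1 + lam * ‖gradient (moll Q η σ) (γ t)‖ ^ 2)⁻¹ * ‖γ' t‖)
      (nhdsWithin 0 (Set.Ioi 0))
      (nhds (∫ t in {t ∈ Set.Icc a b | γ t ∉ frontier Q}, ‖γ' t‖)) := by
  obtain ⟨-, -, -, hsupp, -⟩ := hη
  have hIcc : MeasurableSet (Set.Icc a b) := measurableSet_Icc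
  obtain ⟨U, hUopen, hUeq⟩ : ∃ U, IsOpen U ∧
      γ ⁻¹' (frontier Q)ᶜ ∩ Set.Icc a b = U ∩ Set.Icc a b :=
    continuousOn_iff'.mp hγcont _ isClosed_frontier.isOpen_compl
  set T : Set ℝ := γ ⁻¹' (frontier Q)ᶜ ∩ Set.Icc a b with hT
  have hTmeas : MeasurableSet T := by
    rw [hUeq]; exact hUopen.measurableSet.inter hIcc
  set f : ℝ → ℝ := T.indicator (fun t => ‖γ' t‖) with hf
  have key : Tendsto (fun σ : ℝ =>
      ∫ t in Set.Icc a b, (1 + lam * ‖gradient (moll Q η σ) (γ t)‖ ^ 2)⁻¹ * ‖γ' t‖)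
      (𝓝[>] (0:ℝ)) (𝓝 (∫ t in Set.Icc a b, f t)) := by
    apply MeasureTheory.tendsto_integral_filter_of_dominated_convergence (fun t => ‖γ' t‖)
    · -- measurability
      filter_upwards with σ
      have hγm : AEMeasurable γ (volume.restrict (Set.Icc a b)) :=
        hγcont.aemeasurable hIcc
      have hg : Measurable fun x : Pt => ‖gradient (moll Q η σ) x‖ := by
        have h1 : Measurable (fderiv ℝ (moll Q η σ)) := measurable_fderiv ℝ _
        have h2 : Measurable fun x => gradient (moll Q η σ) x := by
          simp only [gradient]
          exact (LinearIsometryEquiv.continuous _).measurable.comp h1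
        exact h2.norm
      have hn : AEMeasurable (fun t => ‖gradient (moll Q η σ) (γ t)‖)
          (volume.restrict (Set.Icc a b)) := hg.comp_aemeasurable hγm
      have h3 : AEMeasurable (fun t => (1 + lam * ‖gradient (moll Q η σ) (γ t)‖ ^ 2)⁻¹)
          (volume.restrict (Set.Icc a b)) := by
        exact (((hn.pow_const 2).const_mul lam).const_add 1).inv
      exact h3.aestronglyMeasurable.mul hγ'int.1
    · -- bound
      filter_upwards with σ
      filter_upwards with t
      have h1 : (0:ℝ) < 1 + lam * ‖gradient (moll Q η σ) (γ t)‖ ^ 2 := by positivity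
      have h2 : (1 + lam * ‖gradient (moll Q η σ) (γ t)‖ ^ 2)⁻¹ ≤ 1 := by
        rw [inv_le_one_iff₀]; right; nlinarith [sq_nonneg ‖gradient (moll Q η σ) (γ t)‖]
      rw [Real.norm_eq_abs, abs_of_nonneg (by positivity)]
      calc (1 + lam * ‖gradient (moll Q η σ) (γ t)‖ ^ 2)⁻¹ * ‖γ' t‖
          ≤ 1 * ‖γ' t‖ := by gcongr
        _ = ‖γ' t‖ := one_mul _
    · exact hγ'int
    · -- pointwise limit
      filter_upwards [MeasureTheory.ae_restrict_mem hIcc] with t ht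
      by_cases hfr : γ t ∈ frontier Q
      · have hf0 : f t = 0 := by
          apply Set.indicator_of_notMem
          intro htT
          exact htT.1 hfr
        rw [hf0]
        have h1 : Tendsto (fun x : ℝ => (1 + lam * x ^ 2)⁻¹) atTop (𝓝 0) := by
          apply Filter.Tendsto.inv_tendsto_atTop
          exact tendsto_atTop_add_const_left _ 1
            ((tendsto_pow_atTop two_ne_zero).const_mul_atTop hlam)
        have h2 := (h1.comp (hblow (γ t) hfr)).mul_const ‖γ' t‖
        simpa using h2
      · -- exterior point
        have hnotint : γ t ∉ interior Q := by
          intro h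
          have hmem : γ t ∈ γ '' Set.Icc a b ∩ interior Q := ⟨⟨t, ht, rfl⟩, h⟩
          rw [havoid] at hmem; exact hmem
        have hnotQ : γ t ∉ Q := by
          intro h
          exact hfr ⟨subset_closure h, hnotint⟩
        obtain ⟨d, hd, hdist⟩ : ∃ d > 0, ∀ y ∈ Q, d ≤ dist (γ t) y := by
          rcases Q.eq_empty_or_nonempty with h | h
          · exact ⟨1, one_pos, by simp [h]⟩
          · exact ⟨Metric.infDist (γ t) Q,
              (hQ.isClosed.notMem_iff_infDist_pos h).mp hnotQ,
              fun y hy => Metric.infDist_le_dist_of_mem hy⟩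
        have htT : t ∈ T := Set.mem_inter hfr ht
        have hft : f t = ‖γ' t‖ := Set.indicator_of_mem htT _
        rw [hft]
        apply Filter.Tendsto.congr' _ tendsto_const_nhds
        filter_upwards [Ioo_mem_nhdsGT_of_mem (Set.left_mem_Ico.mpr (half_pos hd))]
          with σ hσ
        have hmz : moll Q η σ =ᶠ[𝓝 (γ t)] fun _ => (0:ℝ) := by
          filter_upwards [Metric.ball_mem_nhds (γ t) (half_pos hd)] with x hx
          apply moll_zero_aux hsupp hσ.1
          intro y hy
          have hd1 := hdist y hy
          have hxd : dist x (γ t) < d/2 := hx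
          have htri := dist_triangle (γ t) x y
          have hc : dist (γ t) x = dist x (γ t) := dist_comm _ _
          calc σ < d/2 := hσ.2
            _ ≤ dist x y := by linarith
        have hgz : gradient (moll Q η σ) (γ t) = 0 := by
          have h1 : fderiv ℝ (moll Q η σ) (γ t) = 0 := by
            rw [hmz.fderiv_eq]; exact fderiv_const_apply 0
          simp [gradient, h1]
        simp [hgz]
  have hfeq : (∫ t in Set.Icc a b, f t)
      = ∫ t in {t ∈ Set.Icc a b | γ t ∉ frontier Q}, ‖γ' t‖ := by
    have hset : Set.Icc a b ∩ T = {t ∈ Set.Icc a b | γ t ∉ frontier Q} := by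
      ext t
      simp only [hT, Set.mem_inter_iff, Set.mem_preimage, Set.mem_compl_iff,
        Set.mem_setOf_eq]
      tauto
    rw [hf, MeasureTheory.setIntegral_indicator hTmeas, hset]
  rw [hfeq] at key
  exact key
end
end

section
/- (Gradient blow-up at a smooth boundary point.) Let Q ⊆ ℝ² be compact, u = χ_Q, and u_σ = u * η_σ. Suppose x ∈ ∂Q is a flat boundary point: there exist r > 0 and a unit vector e ∈ ℝ² such that Q ∩ ball(x, r) = {y ∈ ball(x, r) : ⟨y − x, e⟩ ≤ 0}. Then for every 0 < σ < r one has ∇u_σ(x) = −(C/σ)·e, where C = ∫_{{w ∈ ℝ² : ⟨w, e⟩ = 0, ‖w‖ ≤ 1}} η(w) dH¹(w) > 0; in particular ‖∇u_σ(x)‖ = C/σ → ∞ as σ → 0⁺, and 1/(1 + λ‖∇u_σ(x)‖²) → 0 for every λ > 0. -/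
open Set Metric MeasureTheory Filter
open scoped ENNReal RealInnerProductSpace Topology

noncomputable section

-- Auxiliary lemmas
def perp (e : Pt) : Pt := !₂[-(e 1), e 0]

variable {e : Pt}

lemma he2 (he : ‖e‖ = 1) : e 0 * e 0 + e 1 * e 1 = 1 := by
  have h : ⟪e, e⟫ = 1 := by
    rw [real_inner_self_eq_norm_sq, he]; norm_num
  simp only [PiLp.inner_apply, Fin.sum_univ_two, RCLike.inner_apply, conj_trivial] at h
  linarith

lemma inner_e_perp : ⟪e, perp e⟫ = 0 := by
  simp only [PiLp.inner_apply, Fin.sum_univ_two, perp, RCLike.inner_apply, conj_trivial,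
    Matrix.cons_val_zero, Matrix.cons_val_one, Matrix.head_cons]
  ring

lemma inner_perp_perp (he : ‖e‖ = 1) : ⟪perp e, perp e⟫ = 1 := by
  simp only [PiLp.inner_apply, Fin.sum_univ_two, perp, RCLike.inner_apply, conj_trivial,
    Matrix.cons_val_zero, Matrix.cons_val_one, Matrix.head_cons]
  nlinarith [he2 he]

lemma norm_perp (he : ‖e‖ = 1) : ‖perp e‖ = 1 := by
  have h := inner_perp_perp he
  rw [real_inner_self_eq_norm_sq] at h
  nlinarith [norm_nonneg (perp e)]

lemma decomp (he : ‖e‖ = 1) (w : Pt) : w = ⟪w, e⟫ • e + ⟪w, perp e⟫ • perp e := by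
  have h2 := he2 he
  refine PiLp.ext fun i => ?_
  fin_cases i <;>
    simp only [PiLp.add_apply, PiLp.smul_apply, smul_eq_mul, PiLp.inner_apply,
      Fin.sum_univ_two, RCLike.inner_apply, conj_trivial, perp, Matrix.cons_val_zero,
      Matrix.cons_val_one, Matrix.head_cons, Fin.isValue, Fin.mk_zero, Fin.mk_one]
  · linear_combination (-(w 0)) * h2
  · linear_combination (-(w 1)) * h2

/-- The orthonormal basis `(e, perp e)`. -/
def onb (he : ‖e‖ = 1) : OrthonormalBasis (Fin 2) ℝ Pt := by
  refine OrthonormalBasis.mk (v := ![e, perp e]) ?_ ?_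
  · rw [orthonormal_iff_ite]
    intro i j
    fin_cases i <;> fin_cases j <;>
      simp [real_inner_self_eq_norm_sq, he, inner_e_perp, real_inner_comm, norm_perp he] <;> nlinarith [he2 he]
  · intro w _
    rw [decomp he w]
    refine Submodule.add_mem _ (Submodule.smul_mem _ _ ?_) (Submodule.smul_mem _ _ ?_) <;>
      apply Submodule.subset_span
    · exact ⟨0, rfl⟩
    · exact ⟨1, rfl⟩

lemma onb_zero (he : ‖e‖ = 1) : onb he 0 = e := by
  simp [onb]

lemma onb_one (he : ‖e‖ = 1) : onb he 1 = perp e := by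
  simp [onb]

/-- The map `(a, c) ↦ a • e + c • perp e` as a measurable equiv. -/
def Tm (he : ‖e‖ = 1) : (ℝ × ℝ) ≃ᵐ Pt :=
  (MeasurableEquiv.finTwoArrow).symm.trans
    ((((MeasurableEquiv.toLp 2 (Fin 2 → ℝ)).symm).symm).trans
      ((onb he).repr.symm.toHomeomorph.toMeasurableEquiv))

lemma Tm_apply (he : ‖e‖ = 1) (p : ℝ × ℝ) : Tm he p = p.1 • e + p.2 • perp e := by
  have h := (onb he).sum_repr_symm (((MeasurableEquiv.toLp 2 (Fin 2 → ℝ)).symm).symm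
    ((MeasurableEquiv.finTwoArrow).symm p))
  rw [Fin.sum_univ_two] at h
  rw [Tm]
  simp only [MeasurableEquiv.trans_apply, Homeomorph.toMeasurableEquiv_coe,
    LinearIsometryEquiv.coe_toHomeomorph]
  rw [← h, onb_zero he, onb_one he]
  rfl

lemma Tm_measurePreserving (he : ‖e‖ = 1) :
    MeasurePreserving (Tm he) volume volume := by
  exact (((onb he).measurePreserving_repr_symm).comp
    (EuclideanSpace.volume_preserving_symm_measurableEquiv_toLp (Fin 2)).symm).comp
    (volume_preserving_finTwoArrow ℝ).symm

lemma inner_Tm (he : ‖e‖ = 1) (p : ℝ × ℝ) : ⟪Tm he p, e⟫ = p.1 := by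
  have h2 := he2 he
  rw [Tm_apply he p]
  simp only [inner_add_left, real_inner_smul_left, PiLp.inner_apply, RCLike.inner_apply,
    conj_trivial, Fin.sum_univ_two, perp, Matrix.cons_val_zero, Matrix.cons_val_one,
    Matrix.head_cons, PiLp.smul_apply, smul_eq_mul]
  linear_combination p.1 * h2

lemma isometry_iota (he : ‖e‖ = 1) : Isometry (fun t : ℝ => t • perp e) := by
  refine Isometry.of_dist_eq fun s t => ?_
  rw [dist_eq_norm, ← sub_smul, norm_smul, norm_perp he, Real.norm_eq_abs, mul_one,
    Real.dist_eq]

lemma S_eq (he : ‖e‖ = 1) :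
    {w : Pt | ⟪w, e⟫ = 0 ∧ ‖w‖ ≤ 1} = (fun t : ℝ => t • perp e) '' Icc (-1) 1 := by
  ext w
  constructor
  · rintro ⟨h0, h1⟩
    refine ⟨⟪w, perp e⟫, ?_, ?_⟩
    · have : ‖w‖ = |⟪w, perp e⟫| := by
        conv_lhs => rw [decomp he w, h0, zero_smul, zero_add]
        rw [norm_smul, norm_perp he, Real.norm_eq_abs, mul_one]
      rw [this] at h1
      constructor <;> [linarith [neg_abs_le ⟪w, perp e⟫]; linarith [le_abs_self ⟪w, perp e⟫]]
    · conv_rhs => rw [decomp he w, h0, zero_smul, zero_add]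
  · rintro ⟨t, ht, rfl⟩
    refine ⟨?_, ?_⟩
    · rw [real_inner_smul_left, real_inner_comm, inner_e_perp, mul_zero]
    · rw [norm_smul, norm_perp he, Real.norm_eq_abs, mul_one, abs_le]
      exact ⟨ht.1, ht.2⟩

lemma hausdorff_restrict (he : ‖e‖ = 1) :
    (μH[1] : Measure Pt).restrict {w : Pt | ⟪w, e⟫ = 0 ∧ ‖w‖ ≤ 1} =
      Measure.map (fun t : ℝ => t • perp e) (volume.restrict (Icc (-1) 1)) := by
  have hι := isometry_iota he
  have hinj : Function.Injective (fun t : ℝ => t • perp e) := hι.injective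
  ext B hB
  rw [Measure.restrict_apply hB,
    Measure.map_apply hι.continuous.measurable hB,
    Measure.restrict_apply (hι.continuous.measurable hB)]
  have himg : B ∩ {w : Pt | ⟪w, e⟫ = 0 ∧ ‖w‖ ≤ 1} =
      (fun t : ℝ => t • perp e) '' ((fun t : ℝ => t • perp e) ⁻¹' B ∩ Icc (-1) 1) := by
    rw [Set.image_inter hinj, Set.image_preimage_eq_inter_range, S_eq he]
    rw [Set.inter_assoc, Set.inter_eq_self_of_subset_right (Set.image_subset_range _ _)]
  rw [himg, hι.hausdorffMeasure_image (Or.inl zero_le_one), hausdorffMeasure_real]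

section Moll
variable {η : Pt → ℝ}

lemma eta_zero_of_norm_gt (hsupp : Function.support η ⊆ Metric.closedBall (0 : Pt) 1)
    {w : Pt} (hw : 1 < ‖w‖) : η w = 0 := by
  by_contra h
  have := hsupp h
  rw [Metric.mem_closedBall, dist_zero_right] at this
  linarith

lemma C_eq_Icc (he : ‖e‖ = 1) (hcont : Continuous η) :
    ∫ w in {w : Pt | ⟪w, e⟫ = 0 ∧ ‖w‖ ≤ 1}, η w ∂(μH[1] : Measure Pt) =
      ∫ t in Icc (-1 : ℝ) 1, η (t • perp e) := by
  rw [hausdorff_restrict he,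
    integral_map (isometry_iota he).continuous.aemeasurable hcont.aestronglyMeasurable]

lemma C_pos (he : ‖e‖ = 1) (hcont : Continuous η) (hnn : ∀ w, 0 ≤ η w)
    (hpos : ∀ w ∈ Metric.ball (0 : Pt) 1, 0 < η w) :
    0 < ∫ t in Icc (-1 : ℝ) 1, η (t • perp e) := by
  have hc : Continuous fun t : ℝ => η (t • perp e) :=
    hcont.comp (continuous_id.smul continuous_const)
  rw [setIntegral_pos_iff_support_of_nonneg_ae (ae_of_all _ fun t => hnn _)
    (hc.integrableOn_Icc)]
  have hsub : Ioo (-1 : ℝ) 1 ⊆ Function.support (fun t : ℝ => η (t • perp e)) ∩ Icc (-1) 1 := by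
    intro t ht
    have hn : ‖t • perp e‖ < 1 := by
      rw [norm_smul, norm_perp he, Real.norm_eq_abs, mul_one, abs_lt]
      exact ⟨ht.1, ht.2⟩
    refine ⟨ne_of_gt (hpos _ ?_), le_of_lt ht.1, le_of_lt ht.2⟩
    rwa [Metric.mem_ball, dist_zero_right]
  calc (0 : ℝ≥0∞) < volume (Ioo (-1 : ℝ) 1) := by rw [Real.volume_Ioo]; norm_num
    _ ≤ _ := measure_mono hsub

lemma g0_eq (he : ‖e‖ = 1) (hsupp : Function.support η ⊆ Metric.closedBall (0 : Pt) 1) :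
    ∫ t : ℝ, η (t • perp e) = ∫ t in Icc (-1 : ℝ) 1, η (t • perp e) := by
  refine (setIntegral_eq_integral_of_forall_compl_eq_zero fun t ht => ?_).symm
  refine eta_zero_of_norm_gt hsupp ?_
  rw [norm_smul, norm_perp he, Real.norm_eq_abs, mul_one]
  rcases not_and_or.1 ht with h | h <;> [skip; skip] <;>
    · rw [not_le] at h
      cases abs_cases t <;> first | linarith | linarith

end Moll

section GG
variable {η : Pt → ℝ}

/-- 1-D profile `g a = ∫ η(a e + t f) dt`. -/
def gfun (η : Pt → ℝ) (e : Pt) (a : ℝ) : ℝ := ∫ t : ℝ, η (a • e + t • perp e)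

/-- `G s = ∫_{⟪w,e⟫ ≥ s} η`. -/
def Gfun (η : Pt → ℝ) (e : Pt) (s : ℝ) : ℝ :=
  ∫ w : Pt, Set.indicator {w : Pt | s ≤ ⟪w, e⟫} η w

lemma meas_halfplane (e : Pt) (s : ℝ) : MeasurableSet {w : Pt | s ≤ ⟪w, e⟫} :=
  (isClosed_le continuous_const (continuous_id.inner continuous_const)).measurableSet

lemma ind_integrable (hInt : Integrable η) (e : Pt) (s : ℝ) :
    Integrable (Set.indicator {w : Pt | s ≤ ⟪w, e⟫} η) :=
  hInt.indicator (meas_halfplane e s)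

lemma comp_Tm_integrable (he : ‖e‖ = 1) {h : Pt → ℝ} (hInt : Integrable h) :
    Integrable (fun p : ℝ × ℝ => h (Tm he p)) volume :=
  ((Tm_measurePreserving he).integrable_comp_emb (Tm he).measurableEmbedding).2 hInt

lemma g_integrable (he : ‖e‖ = 1) (hInt : Integrable η) : Integrable (gfun η e) := by
  have := (comp_Tm_integrable he hInt).integral_prod_left
  refine this.congr (ae_of_all _ fun a => ?_)
  simp only [gfun]
  congr 1
  ext t
  rw [Tm_apply]

lemma G_eq (he : ‖e‖ = 1) (hInt : Integrable η) (s : ℝ) :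
    Gfun η e s = ∫ a : ℝ, Set.indicator (Ici s) (gfun η e) a := by
  have h1 : Gfun η e s = ∫ p : ℝ × ℝ,
      Set.indicator {w : Pt | s ≤ ⟪w, e⟫} η (Tm he p) := by
    rw [Gfun, ← (Tm_measurePreserving he).integral_comp (Tm he).measurableEmbedding]
  rw [h1]
  rw [show (volume : Measure (ℝ × ℝ)) = volume.prod volume from (Measure.volume_eq_prod _ _)]
  rw [integral_prod _ (by
    rw [← (Measure.volume_eq_prod _ _)]
    exact comp_Tm_integrable he (ind_integrable hInt e s))]
  congr 1
  ext a
  by_cases hsa : s ≤ a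
  · rw [Set.indicator_of_mem (Set.mem_Ici.mpr hsa) (gfun η e), gfun]
    congr 1
    ext c
    rw [Set.indicator_of_mem, Tm_apply]
    rw [Set.mem_setOf_eq, inner_Tm he]
    exact hsa
  · rw [Set.indicator_of_notMem (by simpa using hsa) (gfun η e)]
    have : ∀ c : ℝ, Set.indicator {w : Pt | s ≤ ⟪w, e⟫} η (Tm he (a, c)) = 0 := by
      intro c
      rw [Set.indicator_of_notMem]
      show ¬ s ≤ ⟪Tm he (a, c), e⟫
      rw [inner_Tm he]
      exact hsa
    simp only [this, integral_zero]

end GG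

section FTC
variable {η : Pt → ℝ}

lemma G_sub (he : ‖e‖ = 1) (hInt : Integrable η) (s : ℝ) :
    Gfun η e s = Gfun η e 0 - ∫ a in (0:ℝ)..s, gfun η e a := by
  have hg := g_integrable he hInt
  rw [G_eq he hInt s, G_eq he hInt 0, integral_indicator measurableSet_Ici,
    integral_indicator measurableSet_Ici, integral_Ici_eq_integral_Ioi,
    integral_Ici_eq_integral_Ioi]
  rcases le_or_gt 0 s with hs | hs
  · rw [intervalIntegral.integral_of_le hs, ← Set.Ioc_union_Ioi_eq_Ioi hs,
      setIntegral_union (Set.Ioc_disjoint_Ioi le_rfl) measurableSet_Ioi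
        hg.integrableOn hg.integrableOn]
    ring
  · rw [intervalIntegral.integral_of_ge hs.le, ← Set.Ioc_union_Ioi_eq_Ioi hs.le,
      setIntegral_union (Set.Ioc_disjoint_Ioi le_rfl) measurableSet_Ioi
        hg.integrableOn hg.integrableOn]
    ring

lemma g_contAt (he : ‖e‖ = 1) (hcont : Continuous η) (hCS : HasCompactSupport η)
    (hsupp : Function.support η ⊆ Metric.closedBall (0 : Pt) 1) :
    ContinuousAt (gfun η e) 0 := by
  obtain ⟨M, hM⟩ := hCS.exists_bound_of_continuous hcont
  refine continuousAt_of_dominated (bound := Set.indicator (Icc (-2:ℝ) 2) fun _ => M)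
    (Eventually.of_forall fun a =>
      ((hcont.comp ((continuous_const : Continuous fun _ : ℝ => a • e).add
        (continuous_id.smul continuous_const))).aestronglyMeasurable))
    ?_ ?_ ?_
  · filter_upwards [Metric.ball_mem_nhds (0:ℝ) one_pos] with a ha
    refine ae_of_all _ fun t => ?_
    rw [Metric.mem_ball, Real.dist_eq, sub_zero] at ha
    by_cases ht : t ∈ Icc (-2:ℝ) 2
    · rw [Set.indicator_of_mem ht]
      exact hM _
    · rw [Set.indicator_of_notMem ht]
      have ht2 : 2 < |t| := by
        rw [Set.mem_Icc, not_and_or] at ht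
        rcases ht with h | h <;> rw [not_le] at h <;> cases abs_cases t <;> linarith
      have hnorm : 1 < ‖a • e + t • perp e‖ := by
        have h1 : ‖t • perp e‖ ≤ ‖t • perp e + a • e‖ + ‖a • e‖ := by
          simpa using norm_add_le (t • perp e + a • e) (-(a • e))
        rw [add_comm]
        rw [norm_smul, norm_smul, norm_perp he, he, Real.norm_eq_abs, Real.norm_eq_abs,
          mul_one, mul_one] at h1
        linarith
      rw [eta_zero_of_norm_gt hsupp hnorm, norm_zero]
  · exact (MeasureTheory.integrableOn_const (by
      rw [Real.volume_Icc]; exact ENNReal.ofReal_ne_top)).integrable_indicator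
      measurableSet_Icc
  · refine ae_of_all _ fun t => ?_
    exact (hcont.comp ((continuous_id.smul continuous_const).add
      continuous_const)).continuousAt

lemma G_hasDeriv (he : ‖e‖ = 1) (hInt : Integrable η) (hcont : Continuous η)
    (hCS : HasCompactSupport η)
    (hsupp : Function.support η ⊆ Metric.closedBall (0 : Pt) 1) :
    HasDerivAt (Gfun η e) (-(gfun η e 0)) 0 := by
  have hg := g_integrable he hInt
  have key := intervalIntegral.integral_hasDerivAt_right (a := 0) (b := 0)
    (hg.intervalIntegrable)
    ⟨Set.univ, Filter.univ_mem, hg.aestronglyMeasurable.restrict⟩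
    (g_contAt he hcont hCS hsupp)
  have h2 : HasDerivAt (fun s => Gfun η e 0 - ∫ a in (0:ℝ)..s, gfun η e a)
      (-(gfun η e 0)) 0 := key.const_sub _
  have hfe : (fun s => Gfun η e 0 - ∫ a in (0:ℝ)..s, gfun η e a) = Gfun η e :=
    funext fun s => (G_sub he hInt s).symm
  rwa [hfe] at h2

end FTC

section MollEq
variable {η : Pt → ℝ}

lemma moll_eq (he : ‖e‖ = 1)
    (hsupp : Function.support η ⊆ Metric.closedBall (0 : Pt) 1)
    {Q : Set Pt} {x : Pt} {r σ : ℝ} (hσ : 0 < σ) (hσr : σ < r)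
    (hflat : Q ∩ Metric.ball x r = {y ∈ Metric.ball x r | ⟪y - x, e⟫ ≤ 0})
    {x' : Pt} (hx' : ‖x' - x‖ < r - σ) :
    moll Q η σ x' = Gfun η e (⟪x' - x, e⟫ / σ) := by
  classical
  set s : ℝ := ⟪x' - x, e⟫ / σ with hs
  have h1 : moll Q η σ x' = ∫ z : Pt, Set.indicator Q (fun _ => (1:ℝ)) (x' - z) *
      ((σ ^ 2)⁻¹ * η (σ⁻¹ • z)) := by
    rw [moll, ← integral_sub_left_eq_self (fun y => Set.indicator Q (fun _ => (1:ℝ)) y *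
      ((σ ^ 2)⁻¹ * η (σ⁻¹ • (x' - y)))) volume x']
    congr 1
    ext z
    rw [sub_sub_cancel]
  have h3 := MeasureTheory.Measure.integral_comp_smul (μ := (volume : Measure Pt))
    (fun z : Pt => Set.indicator Q (fun _ => (1:ℝ)) (x' - z) * ((σ ^ 2)⁻¹ * η (σ⁻¹ • z))) σ
  -- h3 : ∫ z, F (σ • z) = |(σ ^ 2)⁻¹| • ∫ z, F z  (after finrank simp)
  rw [finrank_euclideanSpace_fin] at h3
  have habs : |((σ ^ 2 : ℝ))⁻¹| = (σ ^ 2)⁻¹ := abs_of_pos (by positivity)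
  rw [habs] at h3
  have h4 : moll Q η σ x' = (σ ^ 2) * ∫ z : Pt,
      Set.indicator Q (fun _ => (1:ℝ)) (x' - σ • z) * ((σ ^ 2)⁻¹ * η z) := by
    rw [h1]
    have h5 : ∀ z : Pt, Set.indicator Q (fun _ => (1:ℝ)) (x' - σ • z) *
        ((σ ^ 2)⁻¹ * η z) = Set.indicator Q (fun _ => (1:ℝ)) (x' - σ • z) *
        ((σ ^ 2)⁻¹ * η (σ⁻¹ • σ • z)) := by
      intro z
      rw [smul_smul, inv_mul_cancel₀ (ne_of_gt hσ), one_smul]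
    simp_rw [h5]
    rw [h3, smul_eq_mul, ← mul_assoc, mul_inv_cancel₀ (by positivity : (σ:ℝ)^2 ≠ 0), one_mul]
  rw [h4]
  have h6 : ∀ z : Pt, Set.indicator Q (fun _ => (1:ℝ)) (x' - σ • z) * ((σ ^ 2)⁻¹ * η z) =
      (σ ^ 2)⁻¹ * Set.indicator {w : Pt | s ≤ ⟪w, e⟫} η z := by
    intro w
    by_cases hw : η w = 0
    · rw [Set.indicator_apply, Set.indicator_apply]
      by_cases hmem : w ∈ {w : Pt | s ≤ ⟪w, e⟫} <;> simp [hw, hmem]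
    · have hw1 : ‖w‖ ≤ 1 := by
        have := hsupp hw
        rwa [Metric.mem_closedBall, dist_zero_right] at this
      have hy : x' - σ • w ∈ Metric.ball x r := by
        rw [Metric.mem_ball, dist_eq_norm]
        have heq : x' - σ • w - x = (x' - x) + (-(σ • w)) := by abel
        rw [heq]
        calc ‖(x' - x) + (-(σ • w))‖ ≤ ‖x' - x‖ + ‖-(σ • w)‖ := norm_add_le _ _
          _ = ‖x' - x‖ + σ * ‖w‖ := by
            rw [norm_neg, norm_smul, Real.norm_eq_abs, abs_of_pos hσ]
          _ ≤ ‖x' - x‖ + σ := by nlinarith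
          _ < r := by linarith
      have hQ_iff : (x' - σ • w ∈ Q) ↔ ⟪x' - σ • w - x, e⟫ ≤ 0 := by
        have := Set.ext_iff.1 hflat (x' - σ • w)
        simp only [Set.mem_inter_iff, Set.mem_setOf_eq, hy, true_and, and_true] at this
        exact this
      have hinner : ⟪x' - σ • w - x, e⟫ = ⟪x' - x, e⟫ - σ * ⟪w, e⟫ := by
        rw [sub_right_comm, inner_sub_left, real_inner_smul_left]
      have hcond : (x' - σ • w ∈ Q) ↔ s ≤ ⟪w, e⟫ := by
        rw [hQ_iff, hinner, hs, div_le_iff₀ hσ]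
        constructor <;> intro h <;> nlinarith
      by_cases hmem : s ≤ ⟪w, e⟫
      · rw [Set.indicator_of_mem (hcond.2 hmem), Set.indicator_of_mem
          (show w ∈ {w : Pt | s ≤ ⟪w, e⟫} from hmem), one_mul]
      · rw [Set.indicator_of_notMem (fun hq => hmem (hcond.1 hq)),
          Set.indicator_of_notMem (show w ∉ {w : Pt | s ≤ ⟪w, e⟫} from hmem),
          zero_mul, mul_zero]
  simp_rw [h6]
  rw [integral_const_mul, ← mul_assoc, mul_inv_cancel₀ (by positivity : (σ:ℝ)^2 ≠ 0), one_mul]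
  rfl

end MollEq

/-- gradient blow-up at a flat boundary point: if near `x ∈ ∂Q` the set
`Q` is the half-plane `{⟨y − x, e⟩ ≤ 0}` (inside `ball(x,r)`), then for every
`0 < σ < r` one has `∇u_σ(x) = −(C/σ)·e` and `‖∇u_σ(x)‖ = C/σ`, where
`C = ∫_{⟨w,e⟩=0, ‖w‖≤1} η dH¹ > 0`; in particular `‖∇u_σ(x)‖ → ∞` as `σ → 0⁺` and
`1/(1 + λ‖∇u_σ(x)‖²) → 0` for every `λ > 0`. -/
theorem statement_11 (Q : Set Pt) (hQ : IsCompact Q)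
    (η : Pt → ℝ) (hη : IsMollifier η)
    (x : Pt) (hx : x ∈ frontier Q) (r : ℝ) (hr : 0 < r)
    (e : Pt) (he : ‖e‖ = 1)
    (hflat : Q ∩ Metric.ball x r = {y ∈ Metric.ball x r | ⟪y - x, e⟫ ≤ 0})
    (C : ℝ)
    (hC : C = ∫ w in {w : Pt | ⟪w, e⟫ = 0 ∧ ‖w‖ ≤ 1}, η w ∂(μH[1] : Measure Pt)) :
    0 < C ∧
    (∀ σ : ℝ, 0 < σ → σ < r →
      gradient (moll Q η σ) x = (-(C / σ)) • e ∧ ‖gradient (moll Q η σ) x‖ = C / σ) ∧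
    Filter.Tendsto (fun σ : ℝ => ‖gradient (moll Q η σ) x‖)
      (nhdsWithin 0 (Set.Ioi 0)) Filter.atTop ∧
    (∀ lam : ℝ, 0 < lam →
      Filter.Tendsto (fun σ : ℝ => (1 + lam * ‖gradient (moll Q η σ) x‖ ^ 2)⁻¹)
        (nhdsWithin 0 (Set.Ioi 0)) (nhds 0)) := by
  obtain ⟨hsm, hnn, hpos, hsupp, hint1⟩ := hη
  have hcont : Continuous η := hsm.continuous
  have hCS : HasCompactSupport η :=
    HasCompactSupport.intro (isCompact_closedBall (0 : Pt) 1) fun w hw =>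
      eta_zero_of_norm_gt hsupp (by
        rw [Metric.mem_closedBall, dist_zero_right, not_le] at hw; exact hw)
  have hInt : Integrable η := hcont.integrable_of_hasCompactSupport hCS
  have hC_Icc : C = ∫ t in Icc (-1:ℝ) 1, η (t • perp e) := by
    rw [hC, C_eq_Icc he hcont]
  have hCpos : 0 < C := by rw [hC_Icc]; exact C_pos he hcont hnn hpos
  have hg0 : gfun η e 0 = C := by
    rw [gfun]
    simp only [zero_smul, zero_add]
    rw [g0_eq he hsupp, ← hC_Icc]
  have hmain : ∀ σ : ℝ, 0 < σ → σ < r →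
      gradient (moll Q η σ) x = (-(C / σ)) • e ∧ ‖gradient (moll Q η σ) x‖ = C / σ := by
    intro σ hσ hσr
    have hG' : HasDerivAt (Gfun η e) (-C) 0 := by
      have := G_hasDeriv he hInt hcont hCS hsupp
      rwa [hg0] at this
    have hinner : HasFDerivAt (fun y : Pt => ⟪e, y⟫) (innerSL ℝ e : Pt →L[ℝ] ℝ) x :=
      (innerSL ℝ e).hasFDerivAt
    have hl : HasFDerivAt (fun y : Pt => ⟪y - x, e⟫ / σ)
        (σ⁻¹ • (innerSL ℝ e : Pt →L[ℝ] ℝ)) x := by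
      have heqf : (fun y : Pt => ⟪y - x, e⟫ / σ) =
          fun y : Pt => σ⁻¹ * ⟪e, y⟫ - σ⁻¹ * ⟪e, x⟫ := by
        funext y
        rw [inner_sub_left, real_inner_comm y e, real_inner_comm x e, div_eq_inv_mul,
          mul_sub]
      rw [heqf]
      exact (hinner.const_mul σ⁻¹).sub_const _
    have hlx : (⟪x - x, e⟫ : ℝ) / σ = 0 := by
      rw [sub_self, inner_zero_left, zero_div]
    have hcomp : HasFDerivAt (fun y : Pt => Gfun η e (⟪y - x, e⟫ / σ))
        ((-C) • (σ⁻¹ • (innerSL ℝ e : Pt →L[ℝ] ℝ))) x := by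
      show HasFDerivAt (Gfun η e ∘ fun y : Pt => ⟪y - x, e⟫ / σ)
        ((-C) • (σ⁻¹ • (innerSL ℝ e : Pt →L[ℝ] ℝ))) x
      refine HasDerivAt.comp_hasFDerivAt x ?_ hl
      rwa [hlx]
    have hEq : moll Q η σ =ᶠ[𝓝 x] fun y : Pt => Gfun η e (⟪y - x, e⟫ / σ) := by
      filter_upwards [Metric.ball_mem_nhds x (show (0:ℝ) < r - σ by linarith)] with y hy
      exact moll_eq he hsupp hσ hσr hflat (by rwa [Metric.mem_ball, dist_eq_norm] at hy)
    have hFD : HasFDerivAt (moll Q η σ)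
        ((-C) • (σ⁻¹ • (innerSL ℝ e : Pt →L[ℝ] ℝ))) x :=
      hcomp.congr_of_eventuallyEq hEq
    have hdual : (InnerProductSpace.toDual ℝ Pt) ((-(C / σ)) • e) =
        (-C) • (σ⁻¹ • (innerSL ℝ e : Pt →L[ℝ] ℝ)) := by
      apply ContinuousLinearMap.ext
      intro v
      simp only [InnerProductSpace.toDual_apply_apply, ContinuousLinearMap.coe_smul',
        Pi.smul_apply, innerSL_apply_apply, real_inner_smul_left, smul_eq_mul]
      rw [div_eq_mul_inv]
      ring
    have hGrad : HasGradientAt (moll Q η σ) ((-(C / σ)) • e) x := by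
      rw [hasGradientAt_iff_hasFDerivAt, hdual]
      exact hFD
    have hgr := hGrad.gradient
    refine ⟨hgr, ?_⟩
    rw [hgr, norm_smul, Real.norm_eq_abs, he, mul_one, abs_neg, abs_div,
      abs_of_pos hCpos, abs_of_pos hσ]
  have hnorm_ev : ∀ᶠ σ in 𝓝[>] (0:ℝ), ‖gradient (moll Q η σ) x‖ = C / σ := by
    filter_upwards [Ioo_mem_nhdsGT_of_mem (Set.left_mem_Ico.2 hr)] with σ hσ
    exact (hmain σ hσ.1 hσ.2).2
  have hT : Tendsto (fun σ : ℝ => ‖gradient (moll Q η σ) x‖) (𝓝[>] (0:ℝ)) atTop := by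
    refine Tendsto.congr' (EventuallyEq.symm hnorm_ev) ?_
    have : Tendsto (fun σ : ℝ => C * σ⁻¹) (𝓝[>] (0:ℝ)) atTop :=
      Tendsto.const_mul_atTop hCpos tendsto_inv_nhdsGT_zero
    exact this.congr fun σ => (div_eq_mul_inv C σ).symm
  refine ⟨hCpos, hmain, hT, ?_⟩
  intro lam hlam
  have h1 : Tendsto (fun σ : ℝ => 1 + lam * ‖gradient (moll Q η σ) x‖ ^ 2)
      (𝓝[>] (0:ℝ)) atTop := by
    apply tendsto_atTop_add_const_left
    apply Tendsto.const_mul_atTop hlam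
    exact (tendsto_pow_atTop two_ne_zero).comp hT
  exact h1.inv_tendsto_atTop
end
end
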